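/- arXiv:1104.4165 — 3 statements merged into one kernel-verified Lean document; each statement's English description precedes it below -/
import Mathlib

section
/- Let H be a subgroup of O(V). Suppose V = M⁰ ⊕ M¹ ⊕ ⋯ ⊕ M^p and V = N⁰ ⊕ N¹ ⊕ ⋯ ⊕ N^p are direct-sum decompositions into H-invariant subspaces with M⁰ ⊆ V^H and N⁰ ⊆ V^H. Suppose H is the internal direct product of normal subgroups H¹, …, H^p, where each H^i maps M^i into itself and acts as the identity on M^j for j ≠ i and on M⁰, and H is also the internal direct product of normal subgroups G¹, …, G^p, where each G^i maps N^i into itself and acts as the identity on N^j for j ≠ i and on N⁰. Assume that for every 1 ≤ j ≤ p, each x ∈ N^j can be written as x = x₁ + x₂ with x₁ ∈ M^j and x₂ ∈ V^H, and each y ∈ M^j can be written as y = y₁ + y₂ with y₁ ∈ N^j and y₂ ∈ V^H. Then H^i = G^i for every 1 ≤ i ≤ p; in particular, the decomposition of H into these indecomposable normal subgroups is unique up to the order. -/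
/-- The orthogonal group of a bilinear form `B`: all linear automorphisms `g` of `V`
with `B (g x) (g y) = B x y` for all `x, y`. -/
def orthogonalGroup {V : Type*} [AddCommGroup V] [Module ℝ V]
    (B : LinearMap.BilinForm ℝ V) : Subgroup (V ≃ₗ[ℝ] V) where
  carrier := {g | ∀ x y : V, B (g x) (g y) = B x y}
  one_mem' := fun _ _ => rfl
  mul_mem' := by
    intro a b ha hb x y
    have : ∀ z : V, (a * b) z = a (b z) := fun _ => rfl
    rw [this, this, ha, hb]
  inv_mem' := by
    intro a ha x y
    have h := ha (a⁻¹ x) (a⁻¹ y)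
    have h1 : a (a⁻¹ x) = x := a.apply_symm_apply x
    have h2 : a (a⁻¹ y) = y := a.apply_symm_apply y
    rw [h1, h2] at h
    exact h.symm

/-- A subspace `W` is invariant under a group `G` of linear automorphisms. -/
def InvariantUnder {V : Type*} [AddCommGroup V] [Module ℝ V]
    (G : Subgroup (V ≃ₗ[ℝ] V)) (W : Submodule ℝ V) : Prop :=
  ∀ g ∈ G, ∀ w ∈ W, g w ∈ W

/-- `W^G`: the maximal trivial subspace of `G` in `W`, i.e. all `w ∈ W` fixed by every
element of `G`. -/
def fixedSubspace {V : Type*} [AddCommGroup V] [Module ℝ V]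
    (G : Subgroup (V ≃ₗ[ℝ] V)) (W : Submodule ℝ V) : Submodule ℝ V where
  carrier := {w | w ∈ W ∧ ∀ g ∈ G, g w = w}
  add_mem' := by
    rintro a b ⟨haW, ha⟩ ⟨hbW, hb⟩
    exact ⟨W.add_mem haW hbW, fun g hg => by rw [map_add, ha g hg, hb g hg]⟩
  zero_mem' := ⟨W.zero_mem, fun g _ => map_zero _⟩
  smul_mem' := by
    rintro c a ⟨haW, ha⟩
    exact ⟨W.smul_mem c haW, fun g hg => by rw [map_smul, ha g hg]⟩

/-- `S(W,G)`: the span of all `w - g w` with `w ∈ W`, `g ∈ G`. -/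
def movedSpan {V : Type*} [AddCommGroup V] [Module ℝ V]
    (G : Subgroup (V ≃ₗ[ℝ] V)) (W : Submodule ℝ V) : Submodule ℝ V :=
  Submodule.span ℝ {x | ∃ w ∈ W, ∃ g ∈ G, x = w - g w}

/-- The restriction of `B` to `W` is nondegenerate. -/
def NondegOn {V : Type*} [AddCommGroup V] [Module ℝ V]
    (B : LinearMap.BilinForm ℝ V) (W : Submodule ℝ V) : Prop :=
  ∀ w ∈ W, (∀ u ∈ W, B w u = 0) → w = 0

/-- `W` is totally isotropic for `B`. -/
def TotallyIsotropic {V : Type*} [AddCommGroup V] [Module ℝ V]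
    (B : LinearMap.BilinForm ℝ V) (W : Submodule ℝ V) : Prop :=
  ∀ x ∈ W, ∀ y ∈ W, B x y = 0

/-- `W` is a maximal nondegenerate subspace of `U` (maximal under inclusion among
nondegenerate subspaces of `U`). -/
def IsMaxNondegIn {V : Type*} [AddCommGroup V] [Module ℝ V]
    (B : LinearMap.BilinForm ℝ V) (U W : Submodule ℝ V) : Prop :=
  W ≤ U ∧ NondegOn B W ∧ ∀ W' : Submodule ℝ V, W' ≤ U → NondegOn B W' → W ≤ W' → W' = W

/-- A nonzero nondegenerate `G`-invariant subspace `W` is indecomposable if it cannot be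
written as a direct sum of two nonzero mutually orthogonal nondegenerate `G`-invariant
subspaces. -/
def IsIndecomposable {V : Type*} [AddCommGroup V] [Module ℝ V]
    (B : LinearMap.BilinForm ℝ V) (G : Subgroup (V ≃ₗ[ℝ] V)) (W : Submodule ℝ V) : Prop :=
  W ≠ ⊥ ∧ NondegOn B W ∧ InvariantUnder G W ∧
    ∀ U₁ U₂ : Submodule ℝ V, U₁ ⊔ U₂ = W → U₁ ⊓ U₂ = ⊥ →
      InvariantUnder G U₁ → InvariantUnder G U₂ → NondegOn B U₁ → NondegOn B U₂ →
      (∀ x ∈ U₁, ∀ y ∈ U₂, B x y = 0) → U₁ = ⊥ ∨ U₂ = ⊥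

/-- `W` admits no nontrivial decomposition into `G`-invariant subspaces. -/
def NoNontrivialDecomp {V : Type*} [AddCommGroup V] [Module ℝ V]
    (G : Subgroup (V ≃ₗ[ℝ] V)) (W : Submodule ℝ V) : Prop :=
  ∀ U₁ U₂ : Submodule ℝ V, U₁ ⊔ U₂ = W → U₁ ⊓ U₂ = ⊥ →
    InvariantUnder G U₁ → InvariantUnder G U₂ → U₁ = ⊥ ∨ U₂ = ⊥

/-- Condition Φ: every indecomposable nondegenerate `H`-invariant subspace `W` with
`W^H ≠ 0` admits no nontrivial decomposition into `H`-invariant subspaces. -/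
def ConditionPhi {V : Type*} [AddCommGroup V] [Module ℝ V]
    (B : LinearMap.BilinForm ℝ V) (H : Subgroup (V ≃ₗ[ℝ] V)) : Prop :=
  ∀ W : Submodule ℝ V, IsIndecomposable B H W → fixedSubspace H W ≠ ⊥ →
    NoNontrivialDecomp H W

/-- `H` is the internal direct product of the subgroups `Hs i`: each `Hs i` is a normal
subgroup of `H`, elements of distinct factors commute, and every element of `H` is,
in a unique way, the product of one element from each factor. -/
def IsInternalDirectProduct {G : Type*} [Group G] (H : Subgroup G) {k : ℕ}
    (Hs : Fin k → Subgroup G) : Prop :=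
  (∀ i, Hs i ≤ H) ∧
  (∀ i, ∀ h ∈ H, ∀ x ∈ Hs i, h * x * h⁻¹ ∈ Hs i) ∧
  (∀ i j, i ≠ j → ∀ x ∈ Hs i, ∀ y ∈ Hs j, x * y = y * x) ∧
  (∀ h ∈ H, ∃! f : ∀ i, Hs i, h = (List.ofFn fun i => ((f i : G))).prod)

/-- The Borel–Lichnerowicz splitting property: for every direct-sum decomposition
`V = U 0 ⊕ U 1 ⊕ ⋯ ⊕ U k` into mutually orthogonal `H`-invariant subspaces with
`U 0 ⊆ V^H` and each `U i` (`i ≥ 1`) nondegenerate, `H` is the internal direct product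
of normal subgroups `Hs 1, …, Hs k` such that each `Hs i` maps `U i` into itself and
acts as the identity on `U j` for every `j ≠ i`. -/
def BorelLichnerowicz {V : Type*} [AddCommGroup V] [Module ℝ V]
    (B : LinearMap.BilinForm ℝ V) (H : Subgroup (V ≃ₗ[ℝ] V)) : Prop :=
  ∀ (k : ℕ) (U : Fin (k + 1) → Submodule ℝ V),
    iSupIndep U → iSup U = ⊤ →
    (∀ i j, i ≠ j → ∀ x ∈ U i, ∀ y ∈ U j, B x y = 0) →
    (∀ i, InvariantUnder H (U i)) →
    U 0 ≤ fixedSubspace H ⊤ →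
    (∀ i : Fin k, NondegOn B (U i.succ)) →
    ∃ Hs : Fin k → Subgroup (V ≃ₗ[ℝ] V),
      IsInternalDirectProduct H Hs ∧
      ∀ i : Fin k,
        (∀ g ∈ Hs i, ∀ x ∈ U i.succ, g x ∈ U i.succ) ∧
        (∀ j : Fin (k + 1), j ≠ i.succ → ∀ g ∈ Hs i, ∀ x ∈ U j, g x = x)

section Aux

variable {V : Type*} [AddCommGroup V] [Module ℝ V]

lemma listprod_fix (W : Submodule ℝ V) :
    ∀ (L : List (V ≃ₗ[ℝ] V)), (∀ g ∈ L, ∀ w ∈ W, g w = w) → ∀ x ∈ W, L.prod x = x := by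
  intro L
  induction L with
  | nil => intro _ x _; rfl
  | cons g L ih =>
    intro h x hx
    rw [List.prod_cons]
    have h1 : (g * L.prod) x = g (L.prod x) := rfl
    rw [h1, ih (fun a ha => h a (List.mem_cons_of_mem _ ha)) x hx]
    exact h g List.mem_cons_self x hx

lemma listprod_single (W : Submodule ℝ V) :
    ∀ (p : ℕ) (f : Fin p → (V ≃ₗ[ℝ] V)) (j : Fin p),
      (∀ k, k ≠ j → ∀ w ∈ W, f k w = w) → (∀ w ∈ W, f j w ∈ W) →
      ∀ x ∈ W, (List.ofFn f).prod x = f j x := by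
  intro p
  induction p with
  | zero => intro _ j; exact j.elim0
  | succ p ih =>
    intro f j hfix hmap x hx
    rw [List.ofFn_succ, List.prod_cons]
    have happ : (f 0 * (List.ofFn fun i : Fin p => f i.succ).prod) x
        = f 0 ((List.ofFn fun i : Fin p => f i.succ).prod x) := rfl
    rw [happ]
    rcases Fin.eq_zero_or_eq_succ j with hj | ⟨j', hj⟩
    · subst hj
      rw [listprod_fix W _ ?_ x hx]
      intro g hg w hw
      obtain ⟨k, rfl⟩ := List.mem_ofFn.mp hg
      exact hfix k.succ (Fin.succ_ne_zero k) w hw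
    · subst hj
      rw [ih (fun i : Fin p => f i.succ) j'
        (fun k hk w hw => hfix k.succ (fun h => hk (Fin.succ_injective _ h)) w hw)
        hmap x hx]
      exact hfix 0 (Ne.symm (Fin.succ_ne_zero j')) _ (hmap x hx)

/-- If `g ∈ H` fixes `M j` pointwise for all `j ≠ i` and fixes `M0` pointwise, then
`g` belongs to the `i`-th factor of the internal direct product decomposition. -/
lemma mem_factor_of_fixes {H : Subgroup (V ≃ₗ[ℝ] V)} {p : ℕ}
    (M0 : Submodule ℝ V) (M : Fin p → Submodule ℝ V)
    (hMsup : iSup (Fin.cons M0 M : Fin (p + 1) → Submodule ℝ V) = ⊤)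
    (Hs : Fin p → Subgroup (V ≃ₗ[ℝ] V))
    (hHs : IsInternalDirectProduct H Hs)
    (hHact : ∀ i, (∀ g ∈ Hs i, ∀ x ∈ M i, g x ∈ M i) ∧
      (∀ j, j ≠ i → ∀ g ∈ Hs i, ∀ x ∈ M j, g x = x) ∧
      (∀ g ∈ Hs i, ∀ x ∈ M0, g x = x))
    (i : Fin p) (g : V ≃ₗ[ℝ] V) (hg : g ∈ H)
    (hfixM : ∀ j, j ≠ i → ∀ x ∈ M j, g x = x)
    (hfixM0 : ∀ x ∈ M0, g x = x) : g ∈ Hs i := by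
  obtain ⟨f, hf, -⟩ := hHs.2.2.2 g hg
  have hone : ∀ k, k ≠ i → (f k : V ≃ₗ[ℝ] V) = 1 := by
    intro k hk
    -- On M k, g acts as f k, but g fixes M k, so f k fixes M k.
    have hfk : ∀ x ∈ M k, (f k : V ≃ₗ[ℝ] V) x = x := by
      intro x hx
      have hp := listprod_single (M k) p (fun m => (f m : V ≃ₗ[ℝ] V)) k
        (fun m hm w hw => (hHact m).2.1 k (Ne.symm hm) (f m : V ≃ₗ[ℝ] V) (f m).2 w hw)
        (fun w hw => (hHact k).1 (f k : V ≃ₗ[ℝ] V) (f k).2 w hw) x hx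
      have hgx : g x = x := hfixM k hk x hx
      rw [hf] at hgx
      rw [← hp]
      exact hgx
    -- f k fixes every summand, hence all of V.
    have hall : ∀ x : V, (f k : V ≃ₗ[ℝ] V) x = x := by
      have hle : iSup (Fin.cons M0 M : Fin (p + 1) → Submodule ℝ V) ≤
          LinearMap.eqLocus ((f k : V ≃ₗ[ℝ] V) : V →ₗ[ℝ] V) (LinearMap.id) := by
        apply iSup_le
        intro j
        refine Fin.cases ?_ ?_ j
        · intro x hx
          exact (hHact k).2.2 (f k : V ≃ₗ[ℝ] V) (f k).2 x hx
        · intro j' x hx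
          by_cases h : j' = k
          · subst h; exact hfk x hx
          · exact (hHact k).2.1 j' h (f k : V ≃ₗ[ℝ] V) (f k).2 x hx
      intro x
      have hx : x ∈ LinearMap.eqLocus ((f k : V ≃ₗ[ℝ] V) : V →ₗ[ℝ] V) (LinearMap.id) := by
        apply hle
        rw [hMsup]
        trivial
      exact hx
    exact LinearEquiv.ext hall
  -- Hence g equals the i-th component.
  have hgi : g = (f i : V ≃ₗ[ℝ] V) := by
    rw [hf]
    apply LinearEquiv.ext
    intro x
    exact listprod_single ⊤ p (fun m => (f m : V ≃ₗ[ℝ] V)) i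
      (fun k hk w _ => by show (f k : V ≃ₗ[ℝ] V) w = w; rw [hone k hk]; rfl)
      (fun w _ => trivial) x trivial
  rw [hgi]
  exact (f i).2

end Aux

/-- If `H` is the internal direct product of `H¹, …, H^p` (resp.
`G¹, …, G^p`) along the decomposition `V = M⁰ ⊕ M¹ ⊕ ⋯ ⊕ M^p` (resp.
`V = N⁰ ⊕ N¹ ⊕ ⋯ ⊕ N^p`), with `M⁰, N⁰ ⊆ V^H`, and each `x ∈ N^j` (resp. `y ∈ M^j`)
decomposes as a sum of an element of `M^j` (resp. `N^j`) and an element of `V^H`, then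
`H^i = G^i` for every `i`; the decomposition of `H` is unique up to the order. -/
theorem normal_factors_unique
    {V : Type*} [AddCommGroup V] [Module ℝ V] [FiniteDimensional ℝ V]
    (B : LinearMap.BilinForm ℝ V)
    (hsymm : ∀ x y : V, B x y = B y x) (hnd : NondegOn B ⊤)
    (H : Subgroup (V ≃ₗ[ℝ] V)) (hH : H ≤ orthogonalGroup B)
    (p : ℕ) (M0 N0 : Submodule ℝ V) (M N : Fin p → Submodule ℝ V)
    (hM0 : M0 ≤ fixedSubspace H ⊤) (hN0 : N0 ≤ fixedSubspace H ⊤)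
    (hMind : iSupIndep (Fin.cons M0 M : Fin (p + 1) → Submodule ℝ V))
    (hMsup : iSup (Fin.cons M0 M : Fin (p + 1) → Submodule ℝ V) = ⊤)
    (hMinv : ∀ i, InvariantUnder H (M i))
    (hNind : iSupIndep (Fin.cons N0 N : Fin (p + 1) → Submodule ℝ V))
    (hNsup : iSup (Fin.cons N0 N : Fin (p + 1) → Submodule ℝ V) = ⊤)
    (hNinv : ∀ i, InvariantUnder H (N i))
    (Hs Gs : Fin p → Subgroup (V ≃ₗ[ℝ] V))
    (hHs : IsInternalDirectProduct H Hs)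
    (hHact : ∀ i, (∀ g ∈ Hs i, ∀ x ∈ M i, g x ∈ M i) ∧
      (∀ j, j ≠ i → ∀ g ∈ Hs i, ∀ x ∈ M j, g x = x) ∧
      (∀ g ∈ Hs i, ∀ x ∈ M0, g x = x))
    (hGs : IsInternalDirectProduct H Gs)
    (hGact : ∀ i, (∀ g ∈ Gs i, ∀ x ∈ N i, g x ∈ N i) ∧
      (∀ j, j ≠ i → ∀ g ∈ Gs i, ∀ x ∈ N j, g x = x) ∧
      (∀ g ∈ Gs i, ∀ x ∈ N0, g x = x))
    (hdecN : ∀ j, ∀ x ∈ N j, ∃ x₁ ∈ M j, ∃ x₂ ∈ fixedSubspace H ⊤, x = x₁ + x₂)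
    (hdecM : ∀ j, ∀ y ∈ M j, ∃ y₁ ∈ N j, ∃ y₂ ∈ fixedSubspace H ⊤, y = y₁ + y₂) :
    ∀ i, Hs i = Gs i := by
  intro i
  apply le_antisymm
  · -- Hs i ≤ Gs i : use the N-decomposition.
    intro g hg
    have hgH : g ∈ H := hHs.1 i hg
    apply mem_factor_of_fixes N0 N hNsup Gs hGs hGact i g hgH
    · intro j hj x hx
      obtain ⟨x₁, hx₁, x₂, hx₂, rfl⟩ := hdecN j x hx
      rw [map_add]
      rw [(hHact i).2.1 j hj g hg x₁ hx₁, hx₂.2 g hgH]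
    · intro x hx
      exact (hN0 hx).2 g hgH
  · -- Gs i ≤ Hs i : use the M-decomposition.
    intro g hg
    have hgH : g ∈ H := hGs.1 i hg
    apply mem_factor_of_fixes M0 M hMsup Hs hHs hHact i g hgH
    · intro j hj x hx
      obtain ⟨y₁, hy₁, y₂, hy₂, rfl⟩ := hdecM j x hx
      rw [map_add]
      rw [(hGact i).2.1 j hj g hg y₁ hy₁, hy₂.2 g hgH]
    · intro x hx
      exact (hM0 hx).2 g hgH
end

section
/- Let H be a subgroup of O(V) with the Borel–Lichnerowicz splitting property. Suppose there is a direct-sum decomposition V = M⁰ ⊕ M¹ ⊕ ⋯ ⊕ M^p into mutually orthogonal H-invariant subspaces, where M⁰ is a maximal nondegenerate subspace of V^H (maximal under inclusion among nondegenerate subspaces of V^H), each M^i (1 ≤ i ≤ p) is nondegenerate and indecomposable, and every M^i with (M^i)^H ≠ 0 admits no nontrivial decomposition into H-invariant subspaces. Then H satisfies Condition Φ: every indecomposable nondegenerate H-invariant subspace W of V with W^H ≠ 0 admits no nontrivial decomposition into H-invariant subspaces. -/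
namespace CPhi

open LinearMap FiniteDimensional Module Submodule

variable {V : Type*} [AddCommGroup V] [Module ℝ V]

section Basic

variable {H : Subgroup (V ≃ₗ[ℝ] V)} {B : LinearMap.BilinForm ℝ V}

lemma mem_fixed {X : Submodule ℝ V} {x : V} :
    x ∈ fixedSubspace H X ↔ x ∈ X ∧ ∀ g ∈ H, g x = x := Iff.rfl

lemma inv_apply_mem {X : Submodule ℝ V} (hX : InvariantUnder H X) {h : V ≃ₗ[ℝ] V}
    (hh : h ∈ H) {v : V} (hv : h v ∈ X) : v ∈ X := by
  have e : (h⁻¹ : V ≃ₗ[ℝ] V) (h v) = v := h.symm_apply_apply v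
  have := hX h⁻¹ (inv_mem hh) (h v) hv
  rwa [e] at this

lemma B_inv (hH : H ≤ orthogonalGroup B) {h : V ≃ₗ[ℝ] V} (hh : h ∈ H) (x y : V) :
    B (h x) (h y) = B x y := hH hh x y

lemma B_inv' (hH : H ≤ orthogonalGroup B) {h : V ≃ₗ[ℝ] V} (hh : h ∈ H) (x y : V) :
    B (h x) y = B x (h⁻¹ y) := by
  have e : h ((h⁻¹ : V ≃ₗ[ℝ] V) y) = y := h.apply_symm_apply y
  have := hH hh x (h⁻¹ y)
  rw [e] at this
  exact this

lemma invariant_sup {X Y : Submodule ℝ V} (hX : InvariantUnder H X) (hY : InvariantUnder H Y) :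
    InvariantUnder H (X ⊔ Y) := by
  intro g hg w hw
  rcases Submodule.mem_sup.1 hw with ⟨x, hx, y, hy, rfl⟩
  rw [map_add]
  exact Submodule.add_mem_sup (hX g hg x hx) (hY g hg y hy)

lemma invariant_inf {X Y : Submodule ℝ V} (hX : InvariantUnder H X) (hY : InvariantUnder H Y) :
    InvariantUnder H (X ⊓ Y) := fun g hg w hw =>
  ⟨hX g hg w hw.1, hY g hg w hw.2⟩

lemma invariant_orthogonal (hH : H ≤ orthogonalGroup B) {X : Submodule ℝ V}
    (hX : InvariantUnder H X) : InvariantUnder H (B.orthogonal X) := by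
  intro g hg w hw
  intro n hn
  have hn' : (g⁻¹ : V ≃ₗ[ℝ] V) n ∈ X := hX g⁻¹ (inv_mem hg) n hn
  have := hw _ hn'
  have e : g ((g⁻¹ : V ≃ₗ[ℝ] V) n) = n := g.apply_symm_apply n
  calc B n (g w) = B (g ((g⁻¹ : V ≃ₗ[ℝ] V) n)) (g w) := by rw [e]
  _ = B ((g⁻¹ : V ≃ₗ[ℝ] V) n) w := hH hg _ _
  _ = 0 := this

lemma nondegOn_iff (hrefl : B.IsRefl) {X : Submodule ℝ V} :
    NondegOn B X ↔ (B.restrict X).Nondegenerate := by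
  constructor
  · intro hnd
    refine (LinearMap.IsRefl.nondegenerate_iff_separatingLeft (B := B.restrict X) (fun x y h => hrefl _ _ h)).2 ?_
    intro x hx
    have : (x : V) = 0 := hnd x x.2 (fun u hu => by
      have := hx ⟨u, hu⟩
      simpa using this)
    exact Subtype.ext this
  · intro hnd w hw h
    have : (⟨w, hw⟩ : ↥X) = 0 := hnd.1 ⟨w, hw⟩ (fun n => by
      simpa using h n n.2)
    simpa using congrArg Subtype.val this

lemma isRefl_of_symm (hsymm : ∀ x y : V, B x y = B y x) : B.IsRefl := by
  intro x y h
  rw [hsymm]; exact h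

end Basic

end CPhi
namespace CPhi

open LinearMap Module Submodule

variable {V : Type*} [AddCommGroup V] [Module ℝ V]
variable {H : Subgroup (V ≃ₗ[ℝ] V)} {B : LinearMap.BilinForm ℝ V}

section Star

variable [FiniteDimensional ℝ V]

/-- A nonzero nondegenerate invariant subspace of an indecomposable `W` equals `W`. -/
lemma eq_of_nondeg_invariant_le (hsymm : ∀ x y : V, B x y = B y x)
    (hH : H ≤ orthogonalGroup B) {W : Submodule ℝ V} (hW : IsIndecomposable B H W)
    {U : Submodule ℝ V} (hUW : U ≤ W) (hUinv : InvariantUnder H U)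
    (hUnd : NondegOn B U) (hUne : U ≠ ⊥) : U = W := by
  obtain ⟨hWne, hWnd, hWinv, hWsplit⟩ := hW
  have hrefl : B.IsRefl := isRefl_of_symm hsymm
  have hc : IsCompl U (B.orthogonal U) :=
    B.isCompl_orthogonal_of_restrict_nondegenerate hrefl ((nondegOn_iff hrefl).1 hUnd)
  set U₂ : Submodule ℝ V := B.orthogonal U ⊓ W with hU₂
  have hsup : U ⊔ U₂ = W := by
    apply le_antisymm
    · exact sup_le hUW inf_le_right
    · intro w hw
      obtain ⟨⟨u, o⟩, huo⟩ := (Submodule.existsUnique_add_of_isCompl_prod hc w).exists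
      have ho : (o : V) ∈ U₂ := by
        refine ⟨o.2, ?_⟩
        have : (o : V) = w - u := by rw [← huo]; abel
        rw [this]
        exact Submodule.sub_mem _ hw (hUW u.2)
      exact Submodule.mem_sup.2 ⟨u, u.2, o, ho, huo⟩
  have hinf : U ⊓ U₂ = ⊥ := by
    rw [eq_bot_iff]
    intro x hx
    have : x ∈ U ⊓ B.orthogonal U := ⟨hx.1, hx.2.1⟩
    rw [hc.inf_eq_bot] at this
    exact this
  have hU₂inv : InvariantUnder H U₂ := invariant_inf (invariant_orthogonal hH hUinv) hWinv
  have hU₂nd : NondegOn B U₂ := by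
    intro w hw hort
    refine hWnd w hw.2 (fun w' hw' => ?_)
    obtain ⟨⟨u, o⟩, huo⟩ := (Submodule.existsUnique_add_of_isCompl_prod hc w').exists
    have ho : (o : V) ∈ U₂ := by
      refine ⟨o.2, ?_⟩
      have : (o : V) = w' - u := by rw [← huo]; abel
      rw [this]; exact Submodule.sub_mem _ hw' (hUW u.2)
    have h1 : B w (u : V) = 0 := by
      rw [hsymm]
      exact hw.1 u u.2
    have h2 : B w (o : V) = 0 := hort o ho
    calc B w w' = B w ((u : V) + (o : V)) := by rw [huo]
    _ = B w (u : V) + B w (o : V) := by rw [map_add]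
    _ = 0 := by rw [h1, h2, add_zero]
  have horto : ∀ x ∈ U, ∀ y ∈ U₂, B x y = 0 := fun x hx y hy => hy.1 x hx
  rcases hWsplit U U₂ hsup hinf hUinv hU₂inv hUnd hU₂nd horto with h | h
  · exact absurd h hUne
  · rw [← hsup, h, sup_bot_eq]

end Star

section Proj

lemma exists_decomp {k : ℕ} (U : Fin k → Submodule ℝ V) (hsup : iSup U = ⊤) (v : V) :
    ∃ u : Fin k → V, (∀ j, u j ∈ U j) ∧ ∑ j, u j = v := by
  let S : Submodule ℝ V :=
    { carrier := {v | ∃ u : Fin k → V, (∀ j, u j ∈ U j) ∧ ∑ j, u j = v}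
      add_mem' := by
        rintro a b ⟨u, hu, rfl⟩ ⟨u', hu', rfl⟩
        exact ⟨u + u', fun j => Submodule.add_mem _ (hu j) (hu' j),
          Finset.sum_add_distrib⟩
      zero_mem' := ⟨0, fun j => Submodule.zero_mem _, Finset.sum_const_zero⟩
      smul_mem' := by
        rintro c a ⟨u, hu, rfl⟩
        exact ⟨c • u, fun j => Submodule.smul_mem _ c (hu j), (Finset.smul_sum).symm⟩ }
  have hle : ∀ j, U j ≤ S := by
    intro j x hx
    refine ⟨Pi.single j x, ?_, ?_⟩
    · intro i
      rcases eq_or_ne i j with rfl | hij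
      · rwa [Pi.single_eq_same]
      · rw [Pi.single_eq_of_ne hij]; exact Submodule.zero_mem _
    · simp [Finset.sum_pi_single]
  have : (⊤ : Submodule ℝ V) ≤ S := hsup ▸ iSup_le hle
  exact this (Submodule.mem_top)

lemma proj_spec {k : ℕ} (U : Fin k → Submodule ℝ V) (hind : iSupIndep U)
    (hsup : iSup U = ⊤) (hinv : ∀ j, InvariantUnder H (U j)) :
    ∃ p : Fin k → (V →ₗ[ℝ] V),
      (∀ j v, p j v ∈ U j) ∧ (∀ v, ∑ j, p j v = v) ∧
      (∀ j, ∀ h ∈ H, ∀ v, p j (h v) = h (p j v)) ∧ (∀ j, ∀ u ∈ U j, p j u = u) := by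
  have hcompl : ∀ j, IsCompl (U j) (⨆ (i) (_ : i ≠ j), U i) := by
    intro j
    refine ⟨hind j, ?_⟩
    rw [codisjoint_iff]
    apply le_antisymm le_top
    rw [← hsup]
    refine iSup_le (fun i => ?_)
    rcases eq_or_ne i j with rfl | hij
    · exact le_sup_left
    · exact le_trans (le_iSup₂ (f := fun (i : Fin k) (_ : i ≠ j) => U i) i hij) le_sup_right
  set p : Fin k → (V →ₗ[ℝ] V) := fun j =>
    (U j).subtype ∘ₗ Submodule.projectionOnto (U j) _ (hcompl j) with hp
  have hmem : ∀ j v, p j v ∈ U j := fun j v => ((Submodule.projectionOnto _ _ _) v).2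
  have honU : ∀ j, ∀ u ∈ U j, p j u = u := by
    intro j u hu
    show ((Submodule.projectionOnto _ _ (hcompl j)) u : V) = u
    have := Submodule.projectionOnto_apply_left (hcompl j) ⟨u, hu⟩
    rw [show ((⟨u, hu⟩ : U j) : V) = u from rfl] at this
    rw [this]
  have honO : ∀ j i, i ≠ j → ∀ u ∈ U i, p j u = 0 := by
    intro j i hij u hu
    show ((Submodule.projectionOnto _ _ (hcompl j)) u : V) = 0
    have hu' : u ∈ (⨆ (i) (_ : i ≠ j), U i) :=
      (le_iSup₂ (f := fun (i : Fin k) (_ : i ≠ j) => U i) i hij) hu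
    rw [Submodule.projectionOnto_apply_of_mem_right (hcompl j) hu']
    rfl
  refine ⟨p, hmem, ?_, ?_, honU⟩
  · intro v
    obtain ⟨u, hu, huv⟩ := exists_decomp U hsup v
    have hpj : ∀ j, p j v = u j := by
      intro j
      rw [← huv, map_sum]
      rw [Finset.sum_eq_single j]
      · exact honU j (u j) (hu j)
      · intro i _ hij
        exact honO j i hij (u i) (hu i)
      · intro hj
        exact absurd (Finset.mem_univ j) hj
    rw [show ∑ j, p j v = ∑ j, u j from Finset.sum_congr rfl (fun j _ => hpj j), huv]
  · intro j h hh v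
    obtain ⟨u, hu, huv⟩ := exists_decomp U hsup v
    have hpj : p j v = u j := by
      rw [← huv, map_sum, Finset.sum_eq_single j]
      · exact honU j (u j) (hu j)
      · intro i _ hij
        exact honO j i hij (u i) (hu i)
      · intro hj
        exact absurd (Finset.mem_univ j) hj
    have hhv : h v = ∑ i, h (u i) := by rw [← huv, map_sum]
    have hpj' : p j (h v) = h (u j) := by
      rw [hhv, map_sum, Finset.sum_eq_single j]
      · exact honU j (h (u j)) (hinv j h hh (u j) (hu j))
      · intro i _ hij
        exact honO j i hij (h (u i)) (hinv i h hh (u i) (hu i))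
      · intro hj
        exact absurd (Finset.mem_univ j) hj
    rw [hpj', hpj]

end Proj

end CPhi
namespace CPhi

open LinearMap Module Submodule

variable {V : Type*} [AddCommGroup V] [Module ℝ V]

/-- Equivariance of a linear map between submodules, with respect to a subgroup `H`. -/
def EqvM (H : Subgroup (V ≃ₗ[ℝ] V)) {X Y : Submodule ℝ V} (u : ↥X →ₗ[ℝ] ↥Y) : Prop :=
  ∀ h ∈ H, ∀ x x' : ↥X, (x' : V) = h (x : V) → ((u x' : V) = h ((u x) : V))

/-- An equivariant unit of the endomorphism algebra. -/
def IsEUnit (H : Subgroup (V ≃ₗ[ℝ] V)) {X : Submodule ℝ V} (f : Module.End ℝ ↥X) : Prop :=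
  ∃ g : Module.End ℝ ↥X, EqvM H g ∧ f * g = 1 ∧ g * f = 1

variable {H : Subgroup (V ≃ₗ[ℝ] V)}

/-- The action of `h ∈ H` on an invariant submodule. -/
def actE {X : Submodule ℝ V} (hX : InvariantUnder H X) {h : V ≃ₗ[ℝ] V} (hh : h ∈ H)
    (x : ↥X) : ↥X := ⟨h x, hX h hh x x.2⟩

@[simp] lemma actE_coe {X : Submodule ℝ V} (hX : InvariantUnder H X) {h : V ≃ₗ[ℝ] V}
    (hh : h ∈ H) (x : ↥X) : ((actE hX hh x : ↥X) : V) = h (x : V) := rfl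

section EqvLemmas

variable {X Y Z : Submodule ℝ V}

lemma eqv_id : EqvM H (LinearMap.id : ↥X →ₗ[ℝ] ↥X) := by
  intro h hh x x' hx
  exact hx

lemma eqv_one : EqvM H (1 : Module.End ℝ ↥X) := eqv_id

lemma eqv_zero : EqvM H (0 : ↥X →ₗ[ℝ] ↥Y) := by
  intro h hh x x' hx
  simp

lemma eqv_comp {g : ↥Y →ₗ[ℝ] ↥Z} {u : ↥X →ₗ[ℝ] ↥Y} (hg : EqvM H g) (hu : EqvM H u) :
    EqvM H (g ∘ₗ u) := by
  intro h hh x x' hx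
  exact hg h hh (u x) (u x') (hu h hh x x' hx)

lemma eqv_mul {f g : Module.End ℝ ↥X} (hf : EqvM H f) (hg : EqvM H g) : EqvM H (f * g) :=
  eqv_comp hf hg

lemma eqv_add {u v : ↥X →ₗ[ℝ] ↥Y} (hu : EqvM H u) (hv : EqvM H v) : EqvM H (u + v) := by
  intro h hh x x' hx
  have h1 := hu h hh x x' hx
  have h2 := hv h hh x x' hx
  simp only [LinearMap.add_apply, Submodule.coe_add, map_add, h1, h2]

lemma eqv_smul (c : ℝ) {u : ↥X →ₗ[ℝ] ↥Y} (hu : EqvM H u) : EqvM H (c • u) := by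
  intro h hh x x' hx
  have h1 := hu h hh x x' hx
  simp only [LinearMap.smul_apply, Submodule.coe_smul, map_smul, h1]

lemma eqv_sub {u v : ↥X →ₗ[ℝ] ↥Y} (hu : EqvM H u) (hv : EqvM H v) : EqvM H (u - v) := by
  intro h hh x x' hx
  have h1 := hu h hh x x' hx
  have h2 := hv h hh x x' hx
  simp only [LinearMap.sub_apply, Submodule.coe_sub, map_sub, h1, h2]

lemma eqv_sum {ι : Type*} (s : Finset ι) (f : ι → (↥X →ₗ[ℝ] ↥Y))
    (hf : ∀ i ∈ s, EqvM H (f i)) : EqvM H (∑ i ∈ s, f i) := by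
  classical
  induction s using Finset.induction_on with
  | empty => simpa using (eqv_zero : EqvM H (0 : ↥X →ₗ[ℝ] ↥Y))
  | @insert a s' ha ih =>
    rw [Finset.sum_insert ha]
    exact eqv_add (hf a (Finset.mem_insert_self a s'))
      (ih (fun i hi => hf i (Finset.mem_insert_of_mem hi)))

lemma eqv_pow {f : Module.End ℝ ↥X} (hf : EqvM H f) (n : ℕ) : EqvM H (f ^ n) := by
  induction n with
  | zero => simpa [pow_zero] using (eqv_one : EqvM H (1 : Module.End ℝ ↥X))
  | succ m ih =>
    rw [pow_succ]
    exact eqv_mul ih hf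

lemma eunit_mul {f g : Module.End ℝ ↥X} (hf : IsEUnit H f) (hg : IsEUnit H g) :
    IsEUnit H (f * g) := by
  obtain ⟨f', hf', hff', hf'f⟩ := hf
  obtain ⟨g', hg', hgg', hg'g⟩ := hg
  refine ⟨g' * f', eqv_mul hg' hf', ?_, ?_⟩
  · have h1 : f * g * (g' * f') = f * ((g * g') * f') := by
      rw [mul_assoc, mul_assoc]
    rw [h1, hgg', one_mul, hff']
  · have h1 : g' * f' * (f * g) = g' * ((f' * f) * g) := by
      rw [mul_assoc, mul_assoc]
    rw [h1, hf'f, one_mul, hg'g]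

lemma eunit_smul {c : ℝ} (hc : c ≠ 0) {f : Module.End ℝ ↥X} (hf : IsEUnit H f) :
    IsEUnit H (c • f) := by
  obtain ⟨g, hg, hfg, hgf⟩ := hf
  refine ⟨c⁻¹ • g, eqv_smul _ hg, ?_, ?_⟩
  · rw [smul_mul_smul_comm, mul_inv_cancel₀ hc, hfg, one_smul]
  · rw [smul_mul_smul_comm, inv_mul_cancel₀ hc, hgf, one_smul]

lemma eunit_of_smul {c : ℝ} (hc : c ≠ 0) {f : Module.End ℝ ↥X} (hf : IsEUnit H (c • f)) :
    IsEUnit H f := by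
  have := eunit_smul (inv_ne_zero hc) hf
  rwa [inv_smul_smul₀ hc] at this

lemma eunit_injective {f : Module.End ℝ ↥X} (hf : IsEUnit H f) : Function.Injective f := by
  obtain ⟨g, _, _, hgf⟩ := hf
  intro x y hxy
  have : (g * f) x = (g * f) y := by simp [Module.End.mul_apply, hxy]
  rwa [hgf] at this

lemma eunit_one : IsEUnit H (1 : Module.End ℝ ↥X) := ⟨1, eqv_one, one_mul 1, one_mul 1⟩

end EqvLemmas

section Fitting

variable {X : Submodule ℝ V} [FiniteDimensional ℝ V]

lemma invariant_map_ker (hXinv : InvariantUnder H X) {Y : Submodule ℝ V}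
    (u : ↥X →ₗ[ℝ] ↥Y) (hu : EqvM H u) :
    InvariantUnder H ((LinearMap.ker u).map X.subtype) := by
  intro g hg w hw
  rcases Submodule.mem_map.1 hw with ⟨x, hx, rfl⟩
  refine Submodule.mem_map.2 ⟨actE hXinv hg x, ?_, rfl⟩
  rw [LinearMap.mem_ker]
  have := hu g hg x (actE hXinv hg x) rfl
  rw [LinearMap.mem_ker.1 hx] at this
  simp only [Submodule.coe_zero, map_zero] at this
  exact Subtype.ext this

lemma invariant_map_range (hXinv : InvariantUnder H X) {Y : Submodule ℝ V}
    (hYinv : InvariantUnder H Y) (u : ↥X →ₗ[ℝ] ↥Y) (hu : EqvM H u) :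
    InvariantUnder H ((LinearMap.range u).map Y.subtype) := by
  intro g hg w hw
  rcases Submodule.mem_map.1 hw with ⟨y, hy, rfl⟩
  rcases LinearMap.mem_range.1 hy with ⟨x, rfl⟩
  refine Submodule.mem_map.2 ⟨u (actE hXinv hg x), LinearMap.mem_range.2 ⟨_, rfl⟩, ?_⟩
  exact hu g hg x (actE hXinv hg x) rfl

lemma eqv_unit_or_nilpotent (hXinv : InvariantUnder H X) (hXne : X ≠ ⊥)
    (hXind : ∀ Y₁ Y₂ : Submodule ℝ V, Y₁ ⊔ Y₂ = X → Y₁ ⊓ Y₂ = ⊥ →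
      InvariantUnder H Y₁ → InvariantUnder H Y₂ → Y₁ = ⊥ ∨ Y₂ = ⊥)
    (f : Module.End ℝ ↥X) (hf : EqvM H f) : IsEUnit H f ∨ IsNilpotent f := by
  set n := Module.finrank ℝ ↥X with hn
  have hnpos : 0 < n :=
    Nat.pos_of_ne_zero (fun h0 => hXne (Submodule.finrank_eq_zero.1 h0))
  set K := LinearMap.ker (f ^ n) with hK
  set R := LinearMap.range (f ^ n) with hR
  have hdisj : K ⊓ R = ⊥ := by
    rw [eq_bot_iff]
    intro x hx
    obtain ⟨hk, hr⟩ := Submodule.mem_inf.1 hx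
    obtain ⟨y, rfl⟩ := LinearMap.mem_range.1 hr
    have hy : y ∈ LinearMap.ker (f ^ (n + n)) := by
      rw [LinearMap.mem_ker, pow_add, Module.End.mul_apply]
      exact LinearMap.mem_ker.1 hk
    rw [Module.End.ker_pow_eq_ker_pow_finrank_of_le (Nat.le_add_right n n), ← hn] at hy
    rw [Submodule.mem_bot]
    exact LinearMap.mem_ker.1 hy
  have hcodis : K ⊔ R = ⊤ := by
    apply Submodule.eq_top_of_finrank_eq
    have h1 := Submodule.finrank_sup_add_finrank_inf_eq K R
    have h2 : Module.finrank ℝ ↥(LinearMap.range (f ^ n))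
        + Module.finrank ℝ ↥(LinearMap.ker (f ^ n)) = Module.finrank ℝ ↥X :=
      LinearMap.finrank_range_add_finrank_ker (f ^ n)
    rw [hdisj, finrank_bot ℝ ↥X] at h1
    rw [← hK, ← hR] at h2
    omega
  have hker_inv := invariant_map_ker hXinv (f ^ n) (eqv_pow hf n)
  have hrange_inv := invariant_map_range hXinv hXinv (f ^ n) (eqv_pow hf n)
  have hsup : K.map X.subtype ⊔ R.map X.subtype = X := by
    rw [← Submodule.map_sup, hcodis, Submodule.map_subtype_top]
  have hinf : K.map X.subtype ⊓ R.map X.subtype = ⊥ := by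
    rw [← Submodule.map_inf _ (Submodule.injective_subtype X), hdisj, Submodule.map_bot]
  rcases hXind _ _ hsup hinf hker_inv hrange_inv with hbot | hbot
  · -- kernel trivial: f is bijective
    left
    have hKbot : K = ⊥ := by
      rw [eq_bot_iff]
      intro x hx
      have : (x : V) ∈ K.map X.subtype := Submodule.mem_map.2 ⟨x, hx, rfl⟩
      rw [hbot] at this
      exact (Submodule.mem_bot ℝ).2 (Subtype.ext this)
    have hinj : Function.Injective f := by
      rw [← LinearMap.ker_eq_bot]
      rw [eq_bot_iff]
      intro x hx
      obtain ⟨m, hm⟩ := Nat.exists_eq_succ_of_ne_zero (Nat.pos_iff_ne_zero.1 hnpos)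
      have : x ∈ K := by
        rw [hK, LinearMap.mem_ker, hm, pow_succ, Module.End.mul_apply,
          LinearMap.mem_ker.1 hx, map_zero]
      rw [hKbot] at this
      exact this
    have hsurj : Function.Surjective f := (LinearMap.injective_iff_surjective).1 hinj
    set e := LinearEquiv.ofBijective f ⟨hinj, hsurj⟩ with he
    have hef : ∀ x, e x = f x := fun x => rfl
    refine ⟨(e.symm : ↥X →ₗ[ℝ] ↥X), ?_, ?_, ?_⟩
    · intro h hh x x' hx
      set b := actE hXinv hh (e.symm x) with hb
      have hfb : f b = x' := by
        apply Subtype.ext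
        have h1 := hf h hh (e.symm x) b rfl
        have h2 : f (e.symm x) = x := by
          rw [← hef, e.apply_symm_apply]
        rw [h2] at h1
        rw [h1, ← hx]
      have : e.symm x' = b := by
        rw [← hfb, ← hef, e.symm_apply_apply]
      rw [show ((e.symm : ↥X →ₗ[ℝ] ↥X) x' : V) = (e.symm x' : V) from rfl, this]
      rfl
    · apply LinearMap.ext
      intro x
      show f (e.symm x) = x
      rw [← hef, e.apply_symm_apply]
    · apply LinearMap.ext
      intro x
      show e.symm (f x) = x
      rw [← hef, e.symm_apply_apply]
  · -- range trivial: f is nilpotent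
    right
    refine ⟨n, ?_⟩
    have hRbot : R = ⊥ := by
      rw [eq_bot_iff]
      intro x hx
      have : (x : V) ∈ R.map X.subtype := Submodule.mem_map.2 ⟨x, hx, rfl⟩
      rw [hbot] at this
      exact (Submodule.mem_bot ℝ).2 (Subtype.ext this)
    rw [← LinearMap.range_eq_bot]
    exact hRbot

lemma eunit_one_sub_of_nilpotent {a : Module.End ℝ ↥X} (ha : EqvM H a)
    (hn : IsNilpotent a) : IsEUnit H (1 - a) := by
  obtain ⟨m, hm⟩ := hn
  set g : Module.End ℝ ↥X := ∑ i ∈ Finset.range m, a ^ i with hg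
  have hcomm : Commute (1 - a) g := by
    apply Commute.sub_left (Commute.one_left g)
    exact Commute.sum_right _ _ _ (fun i _ => (Commute.refl a).pow_right i)
  have hmul : g * (1 - a) = 1 := by
    have h1 : g * (a - 1) = a ^ m - 1 := geom_sum_mul a m
    have h2 : g * (1 - a) = -(g * (a - 1)) := by rw [mul_sub, mul_sub, mul_one, neg_sub]
    rw [h2, h1, hm, zero_sub, neg_neg]
  have hmul' : (1 - a) * g = 1 := by rw [hcomm.eq, hmul]
  exact ⟨g, eqv_sum _ _ (fun i _ => eqv_pow ha i), hmul', hmul⟩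

lemma exists_eunit_of_sum (hXinv : InvariantUnder H X) (hXne : X ≠ ⊥)
    (hXind : ∀ Y₁ Y₂ : Submodule ℝ V, Y₁ ⊔ Y₂ = X → Y₁ ⊓ Y₂ = ⊥ →
      InvariantUnder H Y₁ → InvariantUnder H Y₂ → Y₁ = ⊥ ∨ Y₂ = ⊥) :
    ∀ (n : ℕ) (f : Fin n → Module.End ℝ ↥X), (∀ j, EqvM H (f j)) → (∑ j, f j) = 1 →
      ∃ j, IsEUnit H (f j) := by
  intro n
  induction n with
  | zero =>
    intro f hf hsum
    exfalso
    rw [Finset.univ_eq_empty, Finset.sum_empty] at hsum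
    obtain ⟨x, hx, hx0⟩ := Submodule.ne_bot_iff X |>.1 hXne
    have : (⟨x, hx⟩ : ↥X) = 0 := by
      have := congrArg (fun (t : Module.End ℝ ↥X) => t ⟨x, hx⟩) hsum
      simpa using this.symm
    exact hx0 (by simpa using congrArg Subtype.val this)
  | succ m ih =>
    intro f hf hsum
    by_cases h0 : IsEUnit H (f 0)
    · exact ⟨0, h0⟩
    have hnil : IsNilpotent (f 0) := by
      rcases eqv_unit_or_nilpotent hXinv hXne hXind (f 0) (hf 0) with h | h
      · exact absurd h h0
      · exact h
    have hs : (∑ j : Fin m, f j.succ) = 1 - f 0 := by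
      rw [Fin.sum_univ_succ] at hsum
      rw [eq_sub_iff_add_eq, add_comm]
      exact hsum
    obtain ⟨t, ht, hst, hts⟩ := eunit_one_sub_of_nilpotent (hf 0) hnil
    have hsum' : (∑ j : Fin m, f j.succ * t) = 1 := by
      rw [← Finset.sum_mul, hs, hst]
    obtain ⟨j, hj⟩ := ih (fun j => f j.succ * t) (fun j => eqv_mul (hf j.succ) ht) hsum'
    refine ⟨j.succ, ?_⟩
    have heq : f j.succ = (f j.succ * t) * (1 - f 0) := by
      rw [mul_assoc, hts, mul_one]
    rw [heq]
    exact eunit_mul hj (eunit_one_sub_of_nilpotent (hf 0) hnil)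

end Fitting

end CPhi
namespace CPhi

open LinearMap Module Submodule

variable {V : Type*} [AddCommGroup V] [Module ℝ V]
variable {H : Subgroup (V ≃ₗ[ℝ] V)}

section ProjEqv

lemma proj_equivariant {P Q : Submodule ℝ V} (hc : IsCompl P Q)
    (hP : InvariantUnder H P) (hQ : InvariantUnder H Q) :
    ∀ h ∈ H, ∀ v : V, ((Submodule.projectionOnto P Q hc (h v) : V))
      = h ((Submodule.projectionOnto P Q hc v : V)) := by
  intro h hh v
  set pr := Submodule.projectionOnto P Q hc with hpr
  have hqm : v - (pr v : V) ∈ Q := by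
    rw [← Submodule.projectionOnto_apply_eq_zero_iff (h := hc)]
    rw [map_sub]
    rw [show pr ((pr v : V)) = pr v from Submodule.projectionOnto_apply_left hc (pr v)]
    exact sub_self _
  have h1 : pr (h ((pr v : V))) = ⟨h ((pr v : V)), hP h hh _ (pr v).2⟩ :=
    Submodule.projectionOnto_apply_left hc ⟨h ((pr v : V)), hP h hh _ (pr v).2⟩
  have h2 : pr (h (v - (pr v : V))) = 0 :=
    Submodule.projectionOnto_apply_of_mem_right hc (hQ h hh _ hqm)
  have h3 : h v = h ((pr v : V)) + h (v - (pr v : V)) := by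
    rw [← map_add]
    congr 1
    abel
  calc (pr (h v) : V) = ((pr (h ((pr v : V))) + pr (h (v - (pr v : V)))) : ↥P) := by
        rw [← map_add, ← h3]
  _ = h ((pr v : V)) := by rw [h1, h2, add_zero]

end ProjEqv

section Transfer

variable [FiniteDimensional ℝ V] {B : LinearMap.BilinForm ℝ V}

lemma transfer (hsymm : ∀ x y : V, B x y = B y x) (hH : H ≤ orthogonalGroup B)
    {W X C : Submodule ℝ V} (hWinv : InvariantUnder H W) (hWnd : NondegOn B W)
    (hXinv : InvariantUnder H X) (hCinv : InvariantUnder H C)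
    (hXC_inf : X ⊓ C = ⊥) (hXC_sup : X ⊔ C = W) (hXne : X ≠ ⊥)
    (hXind : ∀ Y₁ Y₂ : Submodule ℝ V, Y₁ ⊔ Y₂ = X → Y₁ ⊓ Y₂ = ⊥ →
      InvariantUnder H Y₁ → InvariantUnder H Y₂ → Y₁ = ⊥ ∨ Y₂ = ⊥)
    (q : LinearMap.BilinForm ℝ ↥X) (hq_symm : ∀ x y, q x y = q y x)
    (hq_nd : q.Nondegenerate)
    (hq_inv : ∀ h ∈ H, ∀ x x' y y' : ↥X, (x' : V) = h (x : V) → (y' : V) = h (y : V) →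
      q x' y' = q x y) :
    ∃ Y : Submodule ℝ V, Y ≤ W ∧ Y ≠ ⊥ ∧ InvariantUnder H Y ∧ NondegOn B Y ∧
      Module.finrank ℝ ↥Y = Module.finrank ℝ ↥X := by
  classical
  have hrefl : B.IsRefl := isRefl_of_symm hsymm
  have hXW : X ≤ W := hXC_sup ▸ le_sup_left
  have hCW : C ≤ W := hXC_sup ▸ le_sup_right
  set BW := B.restrict W with hBWdef
  have hBW : BW.Nondegenerate := (nondegOn_iff hrefl).1 hWnd
  have hBWapply : ∀ a b : ↥W, BW a b = B (a : V) (b : V) := fun a b => rfl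
  set O := B.orthogonal W with hO
  have hOc : IsCompl W O := B.isCompl_orthogonal_of_restrict_nondegenerate hrefl hBW
  have hOinv : InvariantUnder H O := invariant_orthogonal hH hWinv
  set D := C ⊔ O with hD
  have hDinv : InvariantUnder H D := invariant_sup hCinv hOinv
  have hXD : IsCompl X D := by
    constructor
    · rw [disjoint_iff]
      rw [eq_bot_iff]
      intro x hx
      obtain ⟨hxX, hxD⟩ := Submodule.mem_inf.1 hx
      obtain ⟨c, hc, o, ho, hco⟩ := Submodule.mem_sup.1 hxD
      have hxo : x - c ∈ W := Submodule.sub_mem _ (hXW hxX) (hCW hc)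
      have hxo' : x - c = o := by rw [← hco]; abel
      have : x - c ∈ W ⊓ O := ⟨hxo, hxo' ▸ ho⟩
      rw [hOc.inf_eq_bot] at this
      have hxc : x = c := by
        have := (Submodule.mem_bot ℝ).1 this
        have := sub_eq_zero.1 this
        exact this
      have : x ∈ X ⊓ C := ⟨hxX, hxc ▸ hc⟩
      rw [hXC_inf] at this
      exact this
    · rw [codisjoint_iff]
      rw [hD, ← sup_assoc, hXC_sup, hOc.sup_eq_top]
  set r : V →ₗ[ℝ] ↥X := Submodule.projectionOnto X D hXD with hr
  have hrX : ∀ x : ↥X, r (x : V) = x := fun x => Submodule.projectionOnto_apply_left hXD x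
  have hreqv : ∀ h ∈ H, ∀ v : V, ((r (h v) : V)) = h ((r v : V)) :=
    proj_equivariant hXD hXinv hDinv
  set rW : ↥W →ₗ[ℝ] ↥X := r ∘ₗ W.subtype with hrW
  set jmap : ↥X →ₗ[ℝ] ↥W := Submodule.inclusion hXW with hjmap
  have hjcoe : ∀ x : ↥X, ((jmap x : ↥W) : V) = (x : V) := fun x => rfl
  have hrWj : ∀ y : ↥X, rW (jmap y) = y := by
    intro y
    show r ((jmap y : ↥W) : V) = y
    rw [hjcoe]
    exact hrX y
  set toDualW := BW.toDual hBW with htdW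
  set vmap : ↥X →ₗ[ℝ] ↥W := toDualW.symm.toLinearMap ∘ₗ rW.dualMap ∘ₗ q with hvmap
  have hv : ∀ (z : ↥X) (w : ↥W), BW (vmap z) w = q z (rW w) := by
    intro z w
    show BW (toDualW.symm (rW.dualMap (q z))) w = q z (rW w)
    rw [htdW, LinearMap.BilinForm.apply_toDual_symm_apply]
    rfl
  set toDualX := q.toDual hq_nd with htdX
  have qinj : ∀ a b : ↥X, (∀ y, q a y = q b y) → a = b := by
    intro a b hab
    apply toDualX.injective
    apply LinearMap.ext
    intro y
    rw [htdX]
    show q.toDual hq_nd a y = q.toDual hq_nd b y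
    rw [LinearMap.BilinForm.toDual_def, LinearMap.BilinForm.toDual_def]
    exact hab y
  have binj : ∀ a b : ↥W, (∀ w, BW a w = BW b w) → a = b := by
    intro a b hab
    apply toDualW.injective
    apply LinearMap.ext
    intro w
    rw [htdW]
    show BW.toDual hBW a w = BW.toDual hBW b w
    rw [LinearMap.BilinForm.toDual_def, LinearMap.BilinForm.toDual_def]
    exact hab w
  -- the quadratic operator
  set nop : (↥X →ₗ[ℝ] ↥W) → Module.End ℝ ↥X :=
    fun u => toDualX.symm.toLinearMap ∘ₗ (u.dualMap ∘ₗ (BW ∘ₗ u)) with hnopdef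
  have hnop : ∀ u (x y : ↥X), q (nop u x) y = BW (u x) (u y) := by
    intro u x y
    show q (toDualX.symm (u.dualMap (BW (u x)))) y = BW (u x) (u y)
    rw [htdX, LinearMap.BilinForm.apply_toDual_symm_apply]
    rfl
  -- equivariance of jmap
  have hjeqv : EqvM H jmap := by
    intro h hh x x' hx
    rw [hjcoe, hjcoe]
    exact hx
  -- equivariance of vmap
  have hveqv : EqvM H vmap := by
    intro h hh x x' hx
    have hmem : h ((vmap x : ↥W) : V) ∈ W := hWinv h hh _ (vmap x).2
    have : vmap x' = ⟨h ((vmap x : ↥W) : V), hmem⟩ := by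
      apply binj
      intro w
      have hw'' : (h⁻¹ : V ≃ₗ[ℝ] V) (w : V) ∈ W := hWinv h⁻¹ (inv_mem hh) _ w.2
      set w'' : ↥W := ⟨(h⁻¹ : V ≃ₗ[ℝ] V) (w : V), hw''⟩ with hw''def
      have hwcoe : (w : V) = h ((w'' : V)) := by
        rw [hw''def]
        exact (h.apply_symm_apply (w : V)).symm
      have hrww : ((rW w : ↥X) : V) = h ((rW w'' : ↥X) : V) := by
        show ((r (w : V) : ↥X) : V) = h ((r ((w'' : ↥W) : V) : ↥X) : V)
        rw [hwcoe]
        exact hreqv h hh _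
      have h1 : BW (vmap x') w = q x' (rW w) := hv x' w
      have h2 : q x' (rW w) = q x (rW w'') := hq_inv h hh x x' (rW w'') (rW w) hx hrww
      have h3 : BW (⟨h ((vmap x : ↥W) : V), hmem⟩ : ↥W) w = B (h ((vmap x : ↥W) : V)) (w : V) :=
        rfl
      have h4 : B (h ((vmap x : ↥W) : V)) (w : V) = B ((vmap x : ↥W) : V) ((w'' : ↥W) : V) := by
        rw [hwcoe]
        exact hH hh _ _
      have h5 : B ((vmap x : ↥W) : V) ((w'' : ↥W) : V) = BW (vmap x) w'' := rfl
      rw [h1, h2, h3, h4, h5]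
      exact (hv x w'').symm
    rw [this]
  -- equivariance of nop u
  have nop_eqv : ∀ u : ↥X →ₗ[ℝ] ↥W, EqvM H u → EqvM H (nop u) := by
    intro u hu h hh x x' hx
    have hmem : h ((nop u x : ↥X) : V) ∈ X := hXinv h hh _ (nop u x).2
    have : nop u x' = ⟨h ((nop u x : ↥X) : V), hmem⟩ := by
      apply qinj
      intro y
      have hy'' : (h⁻¹ : V ≃ₗ[ℝ] V) (y : V) ∈ X := hXinv h⁻¹ (inv_mem hh) _ y.2
      set y'' : ↥X := ⟨(h⁻¹ : V ≃ₗ[ℝ] V) (y : V), hy''⟩ with hy''def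
      have hycoe : (y : V) = h ((y'' : V)) := (h.apply_symm_apply (y : V)).symm
      have h1 : q (nop u x') y = BW (u x') (u y) := hnop u x' y
      have h2 : ((u x' : ↥W) : V) = h ((u x : ↥W) : V) := hu h hh x x' hx
      have h3 : ((u y : ↥W) : V) = h ((u y'' : ↥W) : V) := hu h hh y'' y hycoe
      have h4 : BW (u x') (u y) = B (h ((u x : ↥W) : V)) (h ((u y'' : ↥W) : V)) := by
        rw [hBWapply, h2, h3]
      have h5 : B (h ((u x : ↥W) : V)) (h ((u y'' : ↥W) : V)) = BW (u x) (u y'') := by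
        rw [hH hh]
        rfl
      have h6 : BW (u x) (u y'') = q (nop u x) y'' := (hnop u x y'').symm
      have h7 : q (⟨h ((nop u x : ↥X) : V), hmem⟩ : ↥X) y = q (nop u x) y'' :=
        hq_inv h hh (nop u x) ⟨h ((nop u x : ↥X) : V), hmem⟩ y'' y rfl hycoe
      rw [h1, h4, h5, h6, ← h7]
    rw [this]
  -- the key identity
  have cross1 : ∀ x y : ↥X, BW (vmap x) (jmap y) = q x y := by
    intro x y
    rw [hv, hrWj]
  have cross2 : ∀ x y : ↥X, BW (jmap x) (vmap y) = q x y := by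
    intro x y
    rw [hBWapply, hsymm]
    rw [show B ((vmap y : ↥W) : V) ((jmap x : ↥W) : V) = BW (vmap y) (jmap x) from rfl]
    rw [cross1, hq_symm]
  have hN : nop (jmap + vmap) = nop jmap + (2:ℝ) • 1 + nop vmap := by
    apply LinearMap.ext
    intro x
    apply qinj
    intro y
    have lhs : q (nop (jmap + vmap) x) y
        = BW (jmap x) (jmap y) + BW (jmap x) (vmap y)
          + BW (vmap x) (jmap y) + BW (vmap x) (vmap y) := by
      rw [hnop]
      show BW (jmap x + vmap x) (jmap y + vmap y) = _
      simp only [map_add, LinearMap.add_apply]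
      ring
    rw [lhs, cross1, cross2]
    have rhs : q ((nop jmap + (2:ℝ) • 1 + nop vmap) x) y
        = q (nop jmap x) y + (2:ℝ) * q x y + q (nop vmap x) y := by
      simp only [LinearMap.add_apply, LinearMap.smul_apply, Module.End.one_apply, map_add,
        map_smul, LinearMap.add_apply, smul_eq_mul]
    rw [rhs, hnop, hnop]
    ring
  -- find an equivariant unit among the three quadratic operators
  have hEU : ∃ u : ↥X →ₗ[ℝ] ↥W, EqvM H u ∧ IsEUnit H (nop u) := by
    set f : Fin 3 → Module.End ℝ ↥X :=
      ![(2⁻¹:ℝ) • nop (jmap + vmap), (-2⁻¹:ℝ) • nop jmap, (-2⁻¹:ℝ) • nop vmap] with hf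
    have hfeqv : ∀ j, EqvM H (f j) := by
      intro j
      fin_cases j
      · exact eqv_smul _ (nop_eqv _ (eqv_add hjeqv hveqv))
      · exact eqv_smul _ (nop_eqv _ hjeqv)
      · exact eqv_smul _ (nop_eqv _ hveqv)
    have hfsum : (∑ j, f j) = 1 := by
      rw [Fin.sum_univ_three]
      show (2⁻¹:ℝ) • nop (jmap + vmap) + (-2⁻¹:ℝ) • nop jmap + (-2⁻¹:ℝ) • nop vmap = 1
      rw [hN]
      module
    obtain ⟨j, hj⟩ := exists_eunit_of_sum hXinv hXne hXind 3 f hfeqv hfsum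
    fin_cases j
    · exact ⟨jmap + vmap, eqv_add hjeqv hveqv, eunit_of_smul (by norm_num) hj⟩
    · exact ⟨jmap, hjeqv, eunit_of_smul (by norm_num) hj⟩
    · exact ⟨vmap, hveqv, eunit_of_smul (by norm_num) hj⟩
  obtain ⟨u, hueqv, hEUu⟩ := hEU
  have hnopinj : Function.Injective (nop u) := eunit_injective hEUu
  have huinj : Function.Injective u := by
    intro x y hxy
    apply hnopinj
    apply qinj
    intro z
    rw [hnop, hnop, hxy]
  set Y := Submodule.map (W.subtype ∘ₗ u) ⊤ with hY
  have hYle : Y ≤ W := by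
    rintro y ⟨x, _, rfl⟩
    exact (u x).2
  have hcoinj : Function.Injective (W.subtype ∘ₗ u) := by
    intro a b hab
    exact huinj (Subtype.ext hab)
  obtain ⟨x₀, hx₀X, hx₀⟩ := (Submodule.ne_bot_iff X).1 hXne
  have hYne : Y ≠ ⊥ := by
    rw [Submodule.ne_bot_iff]
    refine ⟨((u ⟨x₀, hx₀X⟩ : ↥W) : V), ⟨⟨x₀, hx₀X⟩, Submodule.mem_top, rfl⟩, ?_⟩
    intro hz
    have : u ⟨x₀, hx₀X⟩ = 0 := Subtype.ext hz
    have : (⟨x₀, hx₀X⟩ : ↥X) = 0 := huinj (by rw [this, map_zero])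
    exact hx₀ (by simpa using congrArg Subtype.val this)
  have hYinv : InvariantUnder H Y := by
    rintro h hh y ⟨x, _, rfl⟩
    refine ⟨actE hXinv hh x, Submodule.mem_top, ?_⟩
    exact hueqv h hh x (actE hXinv hh x) rfl
  have hYnd : NondegOn B Y := by
    rintro y ⟨x, _, rfl⟩ hort
    have hx0 : x = 0 := by
      apply hnopinj
      rw [map_zero]
      apply qinj
      intro z
      rw [hnop]
      rw [show q ((0:↥X)) z = 0 from by rw [map_zero]; rfl]
      rw [hBWapply]
      exact hort _ ⟨z, Submodule.mem_top, rfl⟩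
    rw [hx0]
    simp
  refine ⟨Y, hYle, hYne, hYinv, hYnd, ?_⟩
  rw [hY, Submodule.map_top]
  exact LinearMap.finrank_range_of_inj hcoinj

end Transfer

end CPhi
namespace CPhi

open LinearMap Module Submodule

variable {V : Type*} [AddCommGroup V] [Module ℝ V]
variable {H : Subgroup (V ≃ₗ[ℝ] V)}

lemma exists_good_form (N : Type*) [AddCommGroup N] [Module ℝ N] [FiniteDimensional ℝ N] :
    ∃ q : LinearMap.BilinForm ℝ N, (∀ x y, q x y = q y x) ∧ q.Nondegenerate := by
  classical
  set b := Module.finBasis ℝ N with hb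
  refine ⟨LinearMap.mk₂ ℝ (fun x y => ∑ i, b.repr x i * b.repr y i) ?_ ?_ ?_ ?_, ?_, ?_⟩
  · intro m₁ m₂ n
    simp only [map_add, Finsupp.add_apply, add_mul]
    rw [Finset.sum_add_distrib]
  · intro c m n
    simp only [map_smul, Finsupp.smul_apply, smul_eq_mul, Finset.mul_sum, mul_assoc]
  · intro m n₁ n₂
    simp only [map_add, Finsupp.add_apply, mul_add]
    rw [Finset.sum_add_distrib]
  · intro c m n
    simp only [map_smul, Finsupp.smul_apply, smul_eq_mul, Finset.mul_sum]
    apply Finset.sum_congr rfl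
    intros
    ring
  · intro x y
    simp only [LinearMap.mk₂_apply]
    apply Finset.sum_congr rfl
    intros
    ring
  · refine ⟨fun x hx => ?_, fun x hx => ?_⟩
    all_goals
      have hxx := hx x
      rw [LinearMap.mk₂_apply] at hxx
      have hall : ∀ i ∈ Finset.univ, b.repr x i * b.repr x i = 0 :=
        (Finset.sum_eq_zero_iff_of_nonneg (fun i _ => mul_self_nonneg _)).1 hxx
      have hrepr : b.repr x = 0 :=
        Finsupp.ext fun i => mul_self_eq_zero.1 (hall i (Finset.mem_univ i))
      exact b.repr.map_eq_zero_iff.1 hrepr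

lemma fixed_comp {U₁ U₂ : Submodule ℝ V} (hinv1 : InvariantUnder H U₁)
    (hinv2 : InvariantUnder H U₂) (hinf : U₁ ⊓ U₂ = ⊥) {w : V} (hw : w ∈ U₁ ⊔ U₂)
    (hwfix : ∀ h ∈ H, h w = w) :
    ∃ a b, a ∈ U₁ ∧ b ∈ U₂ ∧ a + b = w ∧ (∀ h ∈ H, h a = a) ∧ (∀ h ∈ H, h b = b) := by
  obtain ⟨a, ha, b, hb, hab⟩ := Submodule.mem_sup.1 hw
  refine ⟨a, b, ha, hb, hab, ?_, ?_⟩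
  all_goals
    intro h hh
    have h1 : h a + h b = a + b := by
      rw [← map_add, hab]
      rw [hab] at *
      exact hwfix h hh
    have h2 : h a - a ∈ U₁ := Submodule.sub_mem _ (hinv1 h hh a ha) ha
    have h3 : h a - a = b - h b := by
      have key : h a - a - (b - h b) = (h a + h b) - (a + b) := by abel
      rw [h1, sub_self] at key
      exact sub_eq_zero.1 key
    have h4 : h a - a ∈ U₂ := by
      rw [h3]
      exact Submodule.sub_mem _ hb (hinv2 h hh b hb)
    have h5 : h a - a = 0 := by
      have : h a - a ∈ U₁ ⊓ U₂ := ⟨h2, h4⟩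
      rw [hinf] at this
      exact (Submodule.mem_bot ℝ).1 this
  · exact sub_eq_zero.1 h5
  · have : b - h b = 0 := by rw [← h3]; exact h5
    exact (sub_eq_zero.1 this).symm

lemma isCompl_of_inner {B : LinearMap.BilinForm ℝ V} [FiniteDimensional ℝ V]
    (hrefl : B.IsRefl) {W X C : Submodule ℝ V} (hWnd : NondegOn B W)
    (hinf : X ⊓ C = ⊥) (hsup : X ⊔ C = W) :
    IsCompl X (C ⊔ B.orthogonal W) := by
  have hXW : X ≤ W := hsup ▸ le_sup_left
  have hCW : C ≤ W := hsup ▸ le_sup_right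
  have hOc : IsCompl W (B.orthogonal W) :=
    B.isCompl_orthogonal_of_restrict_nondegenerate hrefl ((nondegOn_iff hrefl).1 hWnd)
  constructor
  · rw [disjoint_iff, eq_bot_iff]
    intro x hx
    obtain ⟨hxX, hxD⟩ := Submodule.mem_inf.1 hx
    obtain ⟨c, hc, o, ho, hco⟩ := Submodule.mem_sup.1 hxD
    have hxo : x - c ∈ W := Submodule.sub_mem _ (hXW hxX) (hCW hc)
    have hxo' : x - c = o := by rw [← hco]; abel
    have hWO : x - c ∈ W ⊓ B.orthogonal W := ⟨hxo, hxo' ▸ ho⟩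
    rw [hOc.inf_eq_bot] at hWO
    have hxc : x = c := sub_eq_zero.1 ((Submodule.mem_bot ℝ).1 hWO)
    have : x ∈ X ⊓ C := ⟨hxX, hxc ▸ hc⟩
    rw [hinf] at this
    exact this
  · rw [codisjoint_iff, ← sup_assoc, hsup, hOc.sup_eq_top]

end CPhi
/-- A sufficient condition for Condition Φ: if `V` admits a direct-sum
decomposition `V = M⁰ ⊕ M¹ ⊕ ⋯ ⊕ M^p` into mutually orthogonal `H`-invariant subspaces
with `M⁰` a maximal nondegenerate subspace of `V^H`, each `M^i` nondegenerate
indecomposable, and every `M^i` with `(M^i)^H ≠ 0` admitting no nontrivial decomposition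
into `H`-invariant subspaces, then `H` satisfies Condition Φ. -/
theorem conditionPhi_of_decomposition
    {V : Type*} [AddCommGroup V] [Module ℝ V] [FiniteDimensional ℝ V]
    (B : LinearMap.BilinForm ℝ V)
    (hsymm : ∀ x y : V, B x y = B y x) (hnd : NondegOn B ⊤)
    (H : Subgroup (V ≃ₗ[ℝ] V)) (hH : H ≤ orthogonalGroup B)
    (hBL : BorelLichnerowicz B H)
    (p : ℕ) (M0 : Submodule ℝ V) (M : Fin p → Submodule ℝ V)
    (hmax : IsMaxNondegIn B (fixedSubspace H ⊤) M0) (hM0inv : InvariantUnder H M0)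
    (hind : iSupIndep (Fin.cons M0 M : Fin (p + 1) → Submodule ℝ V))
    (hsup : iSup (Fin.cons M0 M : Fin (p + 1) → Submodule ℝ V) = ⊤)
    (horth : ∀ i j : Fin (p + 1), i ≠ j →
      ∀ x ∈ (Fin.cons M0 M : Fin (p + 1) → Submodule ℝ V) i,
      ∀ y ∈ (Fin.cons M0 M : Fin (p + 1) → Submodule ℝ V) j, B x y = 0)
    (hindec : ∀ i, IsIndecomposable B H (M i))
    (hphi : ∀ i, fixedSubspace H (M i) ≠ ⊥ → NoNontrivialDecomp H (M i)) :
    ConditionPhi B H := by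
  classical
  intro W hW hWfix U₁ U₂ hU12sup hU12inf hU1inv hU2inv
  by_contra hcon
  push_neg at hcon
  obtain ⟨hU1ne, hU2ne⟩ := hcon
  have hWnd : NondegOn B W := hW.2.1
  have hWinv : InvariantUnder H W := hW.2.2.1
  have hrefl : B.IsRefl := CPhi.isRefl_of_symm hsymm
  -- dimension bookkeeping for U₁, U₂
  have hfr : Module.finrank ℝ W + Module.finrank ℝ (⊥ : Submodule ℝ V)
      = Module.finrank ℝ U₁ + Module.finrank ℝ U₂ := by
    rw [← hU12sup, ← hU12inf]
    exact Submodule.finrank_sup_add_finrank_inf_eq U₁ U₂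
  rw [finrank_bot ℝ V, add_zero] at hfr
  have hU1pos : 0 < Module.finrank ℝ U₁ :=
    Nat.pos_of_ne_zero (fun h0 => hU1ne (Submodule.finrank_eq_zero.1 h0))
  have hU2pos : 0 < Module.finrank ℝ U₂ :=
    Nat.pos_of_ne_zero (fun h0 => hU2ne (Submodule.finrank_eq_zero.1 h0))
  have hU1lt : Module.finrank ℝ U₁ < Module.finrank ℝ W := by omega
  have hU2lt : Module.finrank ℝ U₂ < Module.finrank ℝ W := by omega
  -- fixed vector of W and its components
  obtain ⟨w0, hw0mem, hw0ne⟩ := (Submodule.ne_bot_iff _).1 hWfix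
  have hw0W : w0 ∈ W := hw0mem.1
  have hw0fix : ∀ h ∈ H, h w0 = w0 := hw0mem.2
  obtain ⟨a, b, haU, hbU, habw, hafix, hbfix⟩ :=
    CPhi.fixed_comp hU1inv hU2inv hU12inf (by rw [hU12sup]; exact hw0W) hw0fix
  -- the family of candidate subspaces
  set Cand : Submodule ℝ V → Prop := fun X =>
    X ≤ W ∧ InvariantUnder H X ∧ (∃ x, x ∈ X ∧ x ≠ 0 ∧ ∀ h ∈ H, h x = x) ∧
      ∃ Cm, InvariantUnder H Cm ∧ X ⊓ Cm = ⊥ ∧ X ⊔ Cm = W with hCand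
  have hcand_ex : ∃ Ux, Cand Ux ∧ Module.finrank ℝ Ux < Module.finrank ℝ W := by
    rcases eq_or_ne a 0 with ha0 | ha0
    · have hb0 : b ≠ 0 := by
        intro h
        apply hw0ne
        rw [← habw, ha0, h, add_zero]
      exact ⟨U₂, ⟨hU12sup ▸ le_sup_right, hU2inv, ⟨b, hbU, hb0, hbfix⟩,
        ⟨U₁, hU1inv, by rw [inf_comm]; exact hU12inf, by rw [sup_comm]; exact hU12sup⟩⟩, hU2lt⟩
    · exact ⟨U₁, ⟨hU12sup ▸ le_sup_left, hU1inv, ⟨a, haU, ha0, hafix⟩,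
        ⟨U₂, hU2inv, hU12inf, hU12sup⟩⟩, hU1lt⟩
  have hex : ∃ n, ∃ Xc : Submodule ℝ V, Cand Xc ∧ Module.finrank ℝ Xc = n :=
    ⟨_, hcand_ex.choose, hcand_ex.choose_spec.1, rfl⟩
  set n₀ := Nat.find hex with hn₀
  obtain ⟨X, hXcand, hXrank⟩ := Nat.find_spec hex
  have hn₀lt : n₀ < Module.finrank ℝ W := by
    have h1 : n₀ ≤ Module.finrank ℝ hcand_ex.choose :=
      Nat.find_le ⟨hcand_ex.choose, hcand_ex.choose_spec.1, rfl⟩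
    have h2 := hcand_ex.choose_spec.2
    omega
  obtain ⟨hXW, hXinv, ⟨x₀, hx₀X, hx₀ne, hx₀fix⟩, ⟨Cm, hCminv, hXCminf, hXCmsup⟩⟩ := hXcand
  have hXne : X ≠ ⊥ := by
    intro hbot
    apply hx₀ne
    rw [hbot] at hx₀X
    exact (Submodule.mem_bot ℝ).1 hx₀X
  have hXltW : Module.finrank ℝ X < Module.finrank ℝ W := by rw [hXrank]; exact hn₀lt
  -- minimality makes X indecomposable as a representation
  have hXind : ∀ Y₁ Y₂ : Submodule ℝ V, Y₁ ⊔ Y₂ = X → Y₁ ⊓ Y₂ = ⊥ →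
      InvariantUnder H Y₁ → InvariantUnder H Y₂ → Y₁ = ⊥ ∨ Y₂ = ⊥ := by
    intro Y₁ Y₂ hYsup hYinf hYi1 hYi2
    by_contra hcon'
    push_neg at hcon'
    obtain ⟨hY1ne, hY2ne⟩ := hcon'
    have key : ∀ Z₁ Z₂ : Submodule ℝ V, Z₁ ⊔ Z₂ = X → Z₁ ⊓ Z₂ = ⊥ →
        InvariantUnder H Z₁ → InvariantUnder H Z₂ → Z₂ ≠ ⊥ →
        (∃ z, z ∈ Z₁ ∧ z ≠ 0 ∧ ∀ h ∈ H, h z = z) → False := by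
      rintro Z₁ Z₂ hZsup hZinf hZi1 hZi2 hZ2ne ⟨z, hzZ, hzne, hzfix⟩
      have hZ1X : Z₁ ≤ X := hZsup ▸ le_sup_left
      have hZ2X : Z₂ ≤ X := hZsup ▸ le_sup_right
      have hfr' : Module.finrank ℝ X + Module.finrank ℝ (⊥ : Submodule ℝ V)
          = Module.finrank ℝ Z₁ + Module.finrank ℝ Z₂ := by
        rw [← hZsup, ← hZinf]
        exact Submodule.finrank_sup_add_finrank_inf_eq Z₁ Z₂
      rw [finrank_bot ℝ V, add_zero] at hfr'
      have hZ2pos : 0 < Module.finrank ℝ Z₂ :=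
        Nat.pos_of_ne_zero (fun h0 => hZ2ne (Submodule.finrank_eq_zero.1 h0))
      have hZ1lt : Module.finrank ℝ Z₁ < Module.finrank ℝ X := by omega
      have hcandZ : Cand Z₁ := by
        refine ⟨hZ1X.trans hXW, hZi1, ⟨z, hzZ, hzne, hzfix⟩,
          ⟨Z₂ ⊔ Cm, CPhi.invariant_sup hZi2 hCminv, ?_, ?_⟩⟩
        · rw [eq_bot_iff]
          intro y hy
          obtain ⟨hyZ, hyD⟩ := Submodule.mem_inf.1 hy
          obtain ⟨z₂, hz₂, c, hc, hzc⟩ := Submodule.mem_sup.1 hyD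
          have hyz₂ : y - z₂ ∈ X := Submodule.sub_mem _ (hZ1X hyZ) (hZ2X hz₂)
          have hyc : y - z₂ = c := by rw [← hzc]; abel
          have hXCm : y - z₂ ∈ X ⊓ Cm := ⟨hyz₂, hyc ▸ hc⟩
          rw [hXCminf] at hXCm
          have hyz : y = z₂ := sub_eq_zero.1 ((Submodule.mem_bot ℝ).1 hXCm)
          have : y ∈ Z₁ ⊓ Z₂ := ⟨hyZ, hyz ▸ hz₂⟩
          rw [hZinf] at this
          exact this
        · rw [← sup_assoc, hZsup, hXCmsup]
      exact Nat.find_min hex (by omega : Module.finrank ℝ Z₁ < n₀) ⟨Z₁, hcandZ, rfl⟩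
    obtain ⟨y₁, y₂, hy₁, hy₂, hysum, hy₁fix, hy₂fix⟩ :=
      CPhi.fixed_comp hYi1 hYi2 hYinf (by rw [hYsup]; exact hx₀X) hx₀fix
    rcases eq_or_ne y₁ 0 with h10 | h10
    · have h20 : y₂ ≠ 0 := fun h => hx₀ne (by rw [← hysum, h10, h, add_zero])
      exact key Y₂ Y₁ (by rw [sup_comm]; exact hYsup) (by rw [inf_comm]; exact hYinf)
        hYi2 hYi1 hY1ne ⟨y₂, hy₂, h20, hy₂fix⟩
    · exact key Y₁ Y₂ hYsup hYinf hYi1 hYi2 hY2ne ⟨y₁, hy₁, h10, hy₁fix⟩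
  -- projections of the given decomposition
  set Uc : Fin (p + 1) → Submodule ℝ V := Fin.cons M0 M with hUc
  have hUcinv : ∀ j, InvariantUnder H (Uc j) := by
    intro j
    refine Fin.cases ?_ ?_ j
    · rw [show Uc 0 = M0 from rfl]
      exact hM0inv
    · intro i
      have hUcS : Uc i.succ = M i := by rw [hUc]; exact Fin.cons_succ (α := fun _ : Fin (p + 1) => Submodule ℝ V) M0 M i
      rw [hUcS]
      exact (hindec i).2.2.1
  obtain ⟨pj, hpmem, hpsum, hpeqv, hponU⟩ := CPhi.proj_spec Uc hind hsup hUcinv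
  -- the projection r : V → X
  have hXDc : IsCompl X (Cm ⊔ B.orthogonal W) := CPhi.isCompl_of_inner hrefl hWnd hXCminf hXCmsup
  have hDminv : InvariantUnder H (Cm ⊔ B.orthogonal W) :=
    CPhi.invariant_sup hCminv (CPhi.invariant_orthogonal hH hWinv)
  set r : V →ₗ[ℝ] ↥X := Submodule.projectionOnto X _ hXDc with hrdef
  have hrX : ∀ x : ↥X, r (x : V) = x := fun x => Submodule.projectionOnto_apply_left hXDc x
  have hreqv := CPhi.proj_equivariant hXDc hXinv hDminv
  set α : Fin (p + 1) → Module.End ℝ ↥X := fun j => r ∘ₗ pj j ∘ₗ X.subtype with hα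
  have hαeqv : ∀ j, CPhi.EqvM H (α j) := by
    intro j h hh x x' hx
    show (r (pj j (x' : V)) : V) = h ((r (pj j (x : V)) : V))
    rw [hx, hpeqv j h hh]
    exact hreqv h hh _
  have hαsum : (∑ j, α j) = 1 := by
    apply LinearMap.ext
    intro x
    rw [LinearMap.sum_apply, Module.End.one_apply]
    calc (∑ j, α j x) = ∑ j, r (pj j (x : V)) := rfl
    _ = r (∑ j, pj j (x : V)) := (map_sum r _ _).symm
    _ = r (x : V) := by rw [hpsum]
    _ = x := hrX x
  -- uniform way to finish, given a good invariant form on X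
  have finish : ∀ q : LinearMap.BilinForm ℝ ↥X, (∀ x y, q x y = q y x) → q.Nondegenerate →
      (∀ h ∈ H, ∀ x x' y y' : ↥X, (x' : V) = h (x : V) → (y' : V) = h (y : V) →
        q x' y' = q x y) → False := by
    intro q hqs hqn hqi
    obtain ⟨Y, hYle, hYne, hYinv, hYnd, hYrank⟩ :=
      CPhi.transfer hsymm hH hWinv hWnd hXinv hCminv hXCminf hXCmsup hXne hXind q hqs hqn hqi
    have hYW : Y = W := CPhi.eq_of_nondeg_invariant_le hsymm hH hW hYle hYinv hYnd hYne
    rw [hYW] at hYrank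
    omega
  obtain ⟨jstar, hjstar⟩ := CPhi.exists_eunit_of_sum hXinv hXne hXind (p + 1) α hαeqv hαsum
  rcases Fin.eq_zero_or_eq_succ jstar with rfl | ⟨i, rfl⟩
  · -- case M0 : trivial action on X
    have hM0fix : ∀ m ∈ M0, ∀ h ∈ H, h m = m := fun m hm h hh => (hmax.1 hm).2 h hh
    have hp0M0 : ∀ v, pj 0 v ∈ M0 := fun v => hpmem 0 v
    have htriv : ∀ h ∈ H, ∀ x : ↥X, h (x : V) = (x : V) := by
      intro h hh x
      have hx' : h (x : V) ∈ X := hXinv h hh _ x.2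
      have heq : α 0 (⟨h (x : V), hx'⟩ : ↥X) = α 0 x := by
        show r (pj 0 (h (x : V))) = r (pj 0 (x : V))
        rw [hpeqv 0 h hh, hM0fix _ (hp0M0 (x : V)) h hh]
      have h1 : (⟨h (x : V), hx'⟩ : ↥X) = x := CPhi.eunit_injective hjstar heq
      exact congrArg Subtype.val h1
    obtain ⟨q, hqs, hqn⟩ := CPhi.exists_good_form ↥X
    refine finish q hqs hqn ?_
    intro h hh x x' y y' hx hy
    have hx0 : x' = x := Subtype.ext (by rw [hx, htriv h hh x])
    have hy0 : y' = y := Subtype.ext (by rw [hy, htriv h hh y])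
    rw [hx0, hy0]
  · -- case M i
    obtain ⟨Mi_ne, Mi_nd, Mi_inv, _⟩ := hindec i
    have hpM : ∀ v, pj i.succ v ∈ M i := by
      intro v
      have hUcS : Uc i.succ = M i := by rw [hUc]; exact Fin.cons_succ (α := fun _ : Fin (p + 1) => Submodule ℝ V) M0 M i
      have h1 := hpmem i.succ v
      rwa [hUcS] at h1
    set φ : ↥X →ₗ[ℝ] ↥(M i) :=
      (pj i.succ ∘ₗ X.subtype).codRestrict (M i) (fun x => hpM (x : V)) with hφ
    have hφcoe : ∀ x : ↥X, ((φ x : ↥(M i)) : V) = pj i.succ (x : V) := fun x => rfl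
    set ψ : ↥(M i) →ₗ[ℝ] ↥X := r ∘ₗ (M i).subtype with hψ
    have hψφ : ∀ z, ψ (φ z) = (α i.succ) z := fun z => rfl
    obtain ⟨γ, hγeqv, hβγ, hγβ⟩ := hjstar
    have hαγ : ∀ z, (α i.succ) (γ z) = z := by
      intro z
      have := congrArg (fun t : Module.End ℝ ↥X => t z) hβγ
      simpa [Module.End.mul_apply] using this
    have hγα : ∀ z, γ ((α i.succ) z) = z := by
      intro z
      have := congrArg (fun t : Module.End ℝ ↥X => t z) hγβ
      simpa [Module.End.mul_apply] using this
    have hφeqv : CPhi.EqvM H φ := by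
      intro h hh x x' hx
      rw [hφcoe, hφcoe, hx]
      exact hpeqv i.succ h hh _
    have hψeqv : CPhi.EqvM H ψ := by
      intro h hh m m' hm
      show (r ((m' : V)) : V) = h ((r ((m : V)) : V))
      rw [hm]
      exact hreqv h hh _
    have hφinj : Function.Injective φ := by
      intro x y hxy
      have h1 : (α i.succ) x = (α i.succ) y := by rw [← hψφ, ← hψφ, hxy]
      calc x = γ ((α i.succ) x) := (hγα x).symm
      _ = γ ((α i.succ) y) := by rw [h1]
      _ = y := hγα y
    set xhat : ↥X := ⟨x₀, hx₀X⟩ with hxhat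
    have hφfix : ∀ h ∈ H, h ((φ xhat : ↥(M i)) : V) = ((φ xhat : ↥(M i)) : V) := by
      intro h hh
      have hx' : (xhat : V) = h (xhat : V) := (hx₀fix h hh).symm
      exact (hφeqv h hh xhat xhat hx').symm
    have hφxne : ((φ xhat : ↥(M i)) : V) ≠ 0 := by
      intro h0
      have h1 : φ xhat = 0 := Subtype.ext h0
      have h2 : xhat = 0 := hφinj (by rw [h1, map_zero])
      exact hx₀ne (congrArg Subtype.val h2)
    have hMifix : fixedSubspace H (M i) ≠ ⊥ :=
      (Submodule.ne_bot_iff _).2 ⟨((φ xhat : ↥(M i)) : V), ⟨(φ xhat).2, hφfix⟩, hφxne⟩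
    have hMind := hphi i hMifix
    set e' : Module.End ℝ ↥(M i) := φ ∘ₗ γ ∘ₗ ψ with he'
    have hidem : ∀ m, e' (e' m) = e' m := by
      intro m
      show φ (γ (ψ (φ (γ (ψ m))))) = φ (γ (ψ m))
      rw [hψφ, hαγ]
    have he'eqv : CPhi.EqvM H e' := CPhi.eqv_comp hφeqv (CPhi.eqv_comp hγeqv hψeqv)
    have hsupMi : (LinearMap.range e').map (M i).subtype
        ⊔ (LinearMap.ker e').map (M i).subtype = M i := by
      rw [← Submodule.map_sup]
      have htop : LinearMap.range e' ⊔ LinearMap.ker e' = ⊤ := by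
        apply eq_top_iff.2
        intro m _
        refine Submodule.mem_sup.2 ⟨e' m, LinearMap.mem_range.2 ⟨m, rfl⟩, m - e' m, ?_, by abel⟩
        rw [LinearMap.mem_ker, map_sub, hidem, sub_self]
      rw [htop, Submodule.map_subtype_top]
    have hinfMi : (LinearMap.range e').map (M i).subtype
        ⊓ (LinearMap.ker e').map (M i).subtype = ⊥ := by
      rw [← Submodule.map_inf _ (Submodule.injective_subtype _)]
      have hbot : LinearMap.range e' ⊓ LinearMap.ker e' = ⊥ := by
        rw [eq_bot_iff]
        rintro z ⟨hzr, hzk⟩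
        obtain ⟨c, rfl⟩ := LinearMap.mem_range.1 hzr
        have h1 : e' (e' c) = 0 := LinearMap.mem_ker.1 hzk
        rw [hidem] at h1
        rw [Submodule.mem_bot]
        exact h1
      rw [hbot, Submodule.map_bot]
    rcases hMind _ _ hsupMi hinfMi (CPhi.invariant_map_range Mi_inv Mi_inv e' he'eqv)
        (CPhi.invariant_map_ker Mi_inv e' he'eqv) with h1 | h2
    · exfalso
      have hmem : ((φ xhat : ↥(M i)) : V) ∈ (LinearMap.range e').map (M i).subtype := by
        refine Submodule.mem_map.2 ⟨φ xhat, LinearMap.mem_range.2 ⟨φ xhat, ?_⟩, rfl⟩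
        show φ (γ (ψ (φ xhat))) = φ xhat
        rw [hψφ, hγα]
      rw [h1] at hmem
      exact hφxne ((Submodule.mem_bot ℝ).1 hmem)
    · have hkerbot : ∀ m, e' m = 0 → m = 0 := by
        intro m hm
        have hmem : (m : V) ∈ (LinearMap.ker e').map (M i).subtype :=
          Submodule.mem_map.2 ⟨m, LinearMap.mem_ker.2 hm, rfl⟩
        rw [h2] at hmem
        exact Subtype.ext ((Submodule.mem_bot ℝ).1 hmem)
      have hid : ∀ m, e' m = m := by
        intro m
        have ha : e' (e' m - m) = 0 := by rw [map_sub, hidem, sub_self]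
        exact sub_eq_zero.1 (hkerbot _ ha)
      have hφsurj : Function.Surjective φ := by
        intro m
        exact ⟨γ (ψ m), by rw [show φ (γ (ψ m)) = e' m from rfl, hid]⟩
      set q : LinearMap.BilinForm ℝ ↥X := (B.restrict (M i)).compl₁₂ φ φ with hq
      have hqapp : ∀ x y : ↥X, q x y = B ((φ x : ↥(M i)) : V) ((φ y : ↥(M i)) : V) :=
        fun x y => rfl
      apply finish q
      · intro x y
        rw [hqapp, hqapp, hsymm]
      · refine (LinearMap.IsRefl.nondegenerate_iff_separatingLeft
          (fun x y h => by rw [hqapp] at h ⊢; rw [hsymm]; exact h)).2 ?_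
        intro x hx
        apply hφinj
        rw [map_zero]
        apply Subtype.ext
        apply Mi_nd _ (φ x).2
        intro u hu
        obtain ⟨y, hy⟩ := hφsurj ⟨u, hu⟩
        have h3 := hx y
        rw [hqapp] at h3
        rw [show u = ((φ y : ↥(M i)) : V) from by rw [hy]]
        exact h3
      · intro h hh x x' y y' hx hy
        rw [hqapp, hqapp]
        have h3 := hφeqv h hh x x' hx
        have h4 := hφeqv h hh y y' hy
        rw [h3, h4, hH hh]
end

section
/- Let H be a subgroup of O(V) with the Borel–Lichnerowicz splitting property. Let V = M⁰ ⊕ M¹ ⊕ ⋯ ⊕ M^p and V = N⁰ ⊕ N¹ ⊕ ⋯ ⊕ N^q be two direct-sum decompositions into mutually orthogonal H-invariant subspaces, where M⁰ and N⁰ are maximal nondegenerate subspaces of V^H (maximal under inclusion among nondegenerate subspaces of V^H) and every M^i and N^j (i, j ≥ 1) is nondegenerate and indecomposable. Suppose there is exactly one index j ∈ {1, …, p} for which both (M^j)^H ≠ 0 and M^j admits a nontrivial decomposition into H-invariant subspaces. Let H = H¹ × ⋯ × H^p and H = G¹ × ⋯ × G^q be the internal direct-product decompositions of H into normal subgroups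 given by the splitting property along the two decompositions (so each H^i acts as the identity off M^i and each G^j acts as the identity off N^j). Then p = q and, after a suitable permutation of the indices, H^i = G^i for every 1 ≤ i ≤ p; that is, the corresponding decomposition of H into indecomposable normal subgroups is unique up to the order. -/
set_option linter.unusedSectionVars false

section HolAux

open Submodule

variable {V : Type*} [AddCommGroup V] [Module ℝ V]

lemma lequiv_mul_apply (a b : V ≃ₗ[ℝ] V) (v : V) : (a * b) v = a (b v) := rfl

lemma lequiv_one_apply (v : V) : (1 : V ≃ₗ[ℝ] V) v = v := rfl

lemma mem_fixedSubspace {G : Subgroup (V ≃ₗ[ℝ] V)} {W : Submodule ℝ V} {x : V} :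
    x ∈ fixedSubspace G W ↔ x ∈ W ∧ ∀ g ∈ G, g x = x := Iff.rfl

lemma lequiv_eq_one (g : V ≃ₗ[ℝ] V) (h : ∀ v, g v = v) : g = 1 :=
  LinearEquiv.toLinearMap_injective (LinearMap.ext fun v => h v)

lemma list_prod_fix (l : List (V ≃ₗ[ℝ] V)) {W : Submodule ℝ V}
    (h : ∀ a ∈ l, ∀ x ∈ W, a x = x) : ∀ v ∈ W, l.prod v = v := by
  induction l with
  | nil => intro v _; rfl
  | cons a t ih =>
    intro v hv
    rw [List.prod_cons, lequiv_mul_apply,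
      ih (fun b hb => h b (List.mem_cons_of_mem a hb)) v hv]
    exact h a List.mem_cons_self v hv

lemma ofFn_prod_apply {n : ℕ} (f : Fin n → (V ≃ₗ[ℝ] V)) {W : Submodule ℝ V} (k : Fin n)
    (hk : ∀ x ∈ W, f k x ∈ W) (htriv : ∀ l, l ≠ k → ∀ x ∈ W, f l x = x) :
    ∀ v ∈ W, (List.ofFn f).prod v = f k v := by
  induction n with
  | zero => exact k.elim0
  | succ n ih =>
    intro v hv
    rw [List.ofFn_succ, List.prod_cons, lequiv_mul_apply]
    rcases Fin.eq_zero_or_eq_succ k with hk0 | ⟨k', hk'⟩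
    · subst hk0
      have htail : ∀ a ∈ List.ofFn (fun i => f i.succ), ∀ x ∈ W, a x = x := by
        intro a ha x hx
        obtain ⟨i, rfl⟩ := List.mem_ofFn.mp ha
        exact htriv i.succ (Fin.succ_ne_zero i) x hx
      rw [list_prod_fix _ htail v hv]
    · subst hk'
      rw [ih (fun i => f i.succ) k' hk
        (fun l hl x hx => htriv l.succ (by simpa using hl) x hx) v hv]
      exact htriv 0 (Fin.succ_ne_zero k').symm _ (hk v hv)

end HolAux

section HolAux2

open Submodule

variable {V : Type*} [AddCommGroup V] [Module ℝ V]

/-- All the data of one orthogonal decomposition together with the associated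
internal direct product decomposition of the group `H`. -/
structure DecompData (B : LinearMap.BilinForm ℝ V) (H : Subgroup (V ≃ₗ[ℝ] V)) where
  p : ℕ
  U0 : Submodule ℝ V
  Us : Fin p → Submodule ℝ V
  Gr : Fin p → Subgroup (V ≃ₗ[ℝ] V)
  indep : iSupIndep (Fin.cons U0 Us : Fin (p + 1) → Submodule ℝ V)
  sup_top : iSup (Fin.cons U0 Us : Fin (p + 1) → Submodule ℝ V) = ⊤
  orth' : ∀ i j : Fin (p + 1), i ≠ j →
    ∀ x ∈ (Fin.cons U0 Us : Fin (p + 1) → Submodule ℝ V) i,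
    ∀ y ∈ (Fin.cons U0 Us : Fin (p + 1) → Submodule ℝ V) j, B x y = 0
  max0 : IsMaxNondegIn B (fixedSubspace H ⊤) U0
  indec : ∀ i, IsIndecomposable B H (Us i)
  grle : ∀ i, Gr i ≤ H
  norm : ∀ i, ∀ h ∈ H, ∀ x ∈ Gr i, h * x * h⁻¹ ∈ Gr i
  fact : ∀ h ∈ H, ∃ f : ∀ i, Gr i,
    h = (List.ofFn fun i => ((f i : V ≃ₗ[ℝ] V))).prod
  act_in : ∀ i, ∀ g ∈ Gr i, ∀ x ∈ Us i, g x ∈ Us i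
  act_triv : ∀ i j, j ≠ i → ∀ g ∈ Gr i, ∀ x ∈ Us j, g x = x
  act_triv0 : ∀ i, ∀ g ∈ Gr i, ∀ x ∈ U0, g x = x

namespace DecompData

variable {B : LinearMap.BilinForm ℝ V} {H : Subgroup (V ≃ₗ[ℝ] V)}

/-- The family of all summands, `U0` in position `0`. -/
def fam (D : DecompData B H) : Fin (D.p + 1) → Submodule ℝ V := Fin.cons D.U0 D.Us

lemma fam_zero (D : DecompData B H) : D.fam 0 = D.U0 := rfl

lemma fam_succ (D : DecompData B H) (i : Fin D.p) : D.fam i.succ = D.Us i :=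
  Fin.cons_succ _ _ _

/-- the complementary subspace to the `l`-th summand -/
def comp (D : DecompData B H) (l : Fin (D.p + 1)) : Submodule ℝ V :=
  ⨆ m, ⨆ _ : m ≠ l, D.fam m

lemma isCompl_fam (D : DecompData B H) (l : Fin (D.p + 1)) :
    IsCompl (D.fam l) (D.comp l) := by
  refine ⟨D.indep l, codisjoint_iff.mpr (top_unique ?_)⟩
  rw [← D.sup_top]
  refine iSup_le fun m => ?_
  by_cases h : m = l
  · subst h; exact le_sup_left
  · exact le_trans (le_iSup₂ (f := fun m (_ : m ≠ l) => D.fam m) m h) le_sup_right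

lemma mem_comp_of_mem (D : DecompData B H) {l m : Fin (D.p + 1)} (h : m ≠ l) {v : V}
    (hv : v ∈ D.fam m) : v ∈ D.comp l :=
  (le_iSup₂ (f := fun m (_ : m ≠ l) => D.fam m) m h) hv

/-- Projection onto the `l`-th summand, as an endomorphism of `V`. -/
noncomputable def proj (D : DecompData B H) (l : Fin (D.p + 1)) : V →ₗ[ℝ] V :=
  (D.fam l).subtype ∘ₗ (D.fam l).linearProjOfIsCompl (D.comp l) (D.isCompl_fam l)

lemma proj_mem (D : DecompData B H) (l : Fin (D.p + 1)) (v : V) : D.proj l v ∈ D.fam l :=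
  ((D.fam l).linearProjOfIsCompl (D.comp l) (D.isCompl_fam l) v).2

lemma proj_of_mem (D : DecompData B H) {l : Fin (D.p + 1)} {v : V} (hv : v ∈ D.fam l) :
    D.proj l v = v := by
  have h := Submodule.linearProjOfIsCompl_apply_left (D.isCompl_fam l) ⟨v, hv⟩
  exact congrArg Subtype.val h

lemma proj_of_mem_comp (D : DecompData B H) {l : Fin (D.p + 1)} {v : V}
    (hv : v ∈ D.comp l) : D.proj l v = 0 := by
  show ((D.fam l).projectionOnto (D.comp l) (D.isCompl_fam l) v : V) = 0
  rw [Submodule.projectionOnto_apply_of_mem_right (D.isCompl_fam l) hv]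
  rfl

lemma proj_of_mem_other (D : DecompData B H) {l m : Fin (D.p + 1)} (h : m ≠ l) {v : V}
    (hv : v ∈ D.fam m) : D.proj l v = 0 :=
  D.proj_of_mem_comp (D.mem_comp_of_mem h hv)

lemma sub_proj_mem_comp (D : DecompData B H) (l : Fin (D.p + 1)) (v : V) :
    v - D.proj l v ∈ D.comp l := by
  rw [← Submodule.linearProjOfIsCompl_apply_eq_zero_iff (D.isCompl_fam l)]
  have h := Submodule.linearProjOfIsCompl_apply_left (D.isCompl_fam l)
    ⟨D.proj l v, D.proj_mem l v⟩
  rw [map_sub]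
  rw [show (D.fam l).projectionOnto (D.comp l) (D.isCompl_fam l) (D.proj l v)
      = ⟨D.proj l v, D.proj_mem l v⟩ from h]
  ext
  simp [proj]
  exact sub_self _

lemma sum_proj (D : DecompData B H) (v : V) : ∑ l, D.proj l v = v := by
  have hv : v ∈ iSup D.fam := by rw [show iSup D.fam = ⊤ from D.sup_top]; trivial
  refine Submodule.iSup_induction (motive := fun x => ∑ l, D.proj l x = x) D.fam hv ?_ ?_ ?_
  · intro m x hx
    refine (Finset.sum_eq_single m (fun l _ hlm => D.proj_of_mem_other (Ne.symm hlm) hx)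
      (fun hm => absurd (Finset.mem_univ m) hm)).trans (D.proj_of_mem hx)
  · simp
  · intro x y hx hy
    simp only [map_add, Finset.sum_add_distrib, hx, hy]

lemma orth_comp (D : DecompData B H) {l : Fin (D.p + 1)} {x y : V} (hx : x ∈ D.fam l)
    (hy : y ∈ D.comp l) : B x y = 0 := by
  have hle : D.comp l ≤ LinearMap.ker (B x) := by
    refine iSup_le fun m => iSup_le fun hm => fun w hw => ?_
    exact LinearMap.mem_ker.mpr (D.orth' l m (Ne.symm hm) x hx w hw)
  exact LinearMap.mem_ker.mp (hle hy)

lemma proj_selfadj (D : DecompData B H) (hsymm : ∀ x y : V, B x y = B y x)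
    (l : Fin (D.p + 1)) (v w : V) : B (D.proj l v) w = B v (D.proj l w) := by
  have h1 : B (D.proj l v) w = B (D.proj l v) (D.proj l w) := by
    conv_lhs => rw [show w = D.proj l w + (w - D.proj l w) by abel]
    rw [map_add, D.orth_comp (D.proj_mem l v) (D.sub_proj_mem_comp l w), add_zero]
  have h2 : B v (D.proj l w) = B (D.proj l v) (D.proj l w) := by
    conv_lhs => rw [show v = D.proj l v + (v - D.proj l v) by abel]
    rw [map_add, LinearMap.add_apply, hsymm (v - D.proj l v) (D.proj l w),
      D.orth_comp (D.proj_mem l w) (D.sub_proj_mem_comp l v), add_zero]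
  rw [h1, h2]

lemma fix0 (D : DecompData B H) {h : V ≃ₗ[ℝ] V} (hh : h ∈ H) {x : V} (hx : x ∈ D.U0) :
    h x = x := (D.max0.1 hx).2 h hh

lemma inv_fam (D : DecompData B H) {h : V ≃ₗ[ℝ] V} (hh : h ∈ H) {l : Fin (D.p + 1)} {x : V}
    (hx : x ∈ D.fam l) : h x ∈ D.fam l := by
  rcases Fin.eq_zero_or_eq_succ l with rfl | ⟨i, rfl⟩
  · rw [D.fix0 hh hx]; exact hx
  · rw [D.fam_succ] at hx ⊢
    exact (D.indec i).2.2.1 h hh x hx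

lemma inv_comp (D : DecompData B H) {h : V ≃ₗ[ℝ] V} (hh : h ∈ H) {l : Fin (D.p + 1)} {x : V}
    (hx : x ∈ D.comp l) : h x ∈ D.comp l := by
  refine Submodule.iSup_induction (motive := fun x => h x ∈ D.comp l)
    (fun m => ⨆ _ : m ≠ l, D.fam m) hx ?_ ?_ ?_
  · intro m x hxm
    have hxm' : x ∈ ⨆ _ : m ≠ l, D.fam m := hxm
    by_cases hm : m ≠ l
    · rw [iSup_pos hm] at hxm'
      exact D.mem_comp_of_mem hm (D.inv_fam hh hxm')
    · rw [iSup_neg hm] at hxm'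
      simp [(Submodule.mem_bot ℝ).mp hxm']
  · simp
  · intro x y hx hy
    rw [map_add]; exact add_mem hx hy

lemma triv_comp (D : DecompData B H) {g : V ≃ₗ[ℝ] V} {l : Fin (D.p + 1)}
    (htriv : ∀ m, m ≠ l → ∀ x ∈ D.fam m, g x = x) :
    ∀ x ∈ D.comp l, g x = x := by
  intro x hx
  refine Submodule.iSup_induction (motive := fun x => g x = x)
    (fun m => ⨆ _ : m ≠ l, D.fam m) hx ?_ ?_ ?_
  · intro m x hxm
    have hxm' : x ∈ ⨆ _ : m ≠ l, D.fam m := hxm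
    by_cases hm : m ≠ l
    · rw [iSup_pos hm] at hxm'
      exact htriv m hm x hxm'
    · rw [iSup_neg hm] at hxm'
      simp [(Submodule.mem_bot ℝ).mp hxm']
  · simp
  · intro x y hx hy
    rw [map_add, hx, hy]

lemma proj_equivariant (D : DecompData B H) {h : V ≃ₗ[ℝ] V} (hh : h ∈ H)
    (l : Fin (D.p + 1)) (v : V) : D.proj l (h v) = h (D.proj l v) := by
  have h1 : D.proj l (h v) - h (D.proj l v) ∈ D.fam l :=
    sub_mem (D.proj_mem l (h v)) (D.inv_fam hh (D.proj_mem l v))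
  have e1 : h v - h (D.proj l v) ∈ D.comp l := by
    have := D.inv_comp hh (D.sub_proj_mem_comp l v)
    rwa [map_sub] at this
  have e2 : h v - D.proj l (h v) ∈ D.comp l := D.sub_proj_mem_comp l (h v)
  have h2 : D.proj l (h v) - h (D.proj l v) ∈ D.comp l := by
    rw [show D.proj l (h v) - h (D.proj l v)
        = (h v - h (D.proj l v)) - (h v - D.proj l (h v)) by abel]
    exact sub_mem e1 e2
  have := Submodule.disjoint_def.mp (D.indep l) _ h1 h2
  exact sub_eq_zero.mp this

end DecompData

end HolAux2

section HolAux3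

open Submodule

variable {V : Type*} [AddCommGroup V] [Module ℝ V]
variable {B : LinearMap.BilinForm ℝ V} {H : Subgroup (V ≃ₗ[ℝ] V)}

lemma ortho_apply (hH : H ≤ orthogonalGroup B) {h : V ≃ₗ[ℝ] V} (hh : h ∈ H) (x y : V) :
    B (h x) (h y) = B x y := hH hh x y

namespace DecompData

lemma mem_fam_succ (D : DecompData B H) {i : Fin D.p} {x : V} (hx : x ∈ D.Us i) :
    x ∈ D.fam i.succ := by rw [D.fam_succ]; exact hx

lemma fam_disjoint (D : DecompData B H) {l m : Fin (D.p + 1)} (h : l ≠ m) {x : V}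
    (hx : x ∈ D.fam l) (hy : x ∈ D.fam m) : x = 0 :=
  Submodule.disjoint_def.mp (D.indep.pairwiseDisjoint h) x hx hy

lemma eq_one_of_triv_fam (D : DecompData B H) {g : V ≃ₗ[ℝ] V}
    (h : ∀ m, ∀ x ∈ D.fam m, g x = x) : g = 1 := by
  refine lequiv_eq_one g fun v => ?_
  have hv : v ∈ iSup D.fam := by rw [show iSup D.fam = ⊤ from D.sup_top]; trivial
  exact Submodule.iSup_induction (motive := fun x => g x = x) D.fam hv
    (fun m x hx => h m x hx) (map_zero g)
    (fun x y hx hy => by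
      show g (x + y) = x + y
      rw [map_add, show g x = x from hx, show g y = y from hy])

lemma factor_action (D : DecompData B H) {g : V ≃ₗ[ℝ] V} (hg : g ∈ H) :
    ∃ f : ∀ i, D.Gr i, g = (List.ofFn fun i => ((f i : V ≃ₗ[ℝ] V))).prod ∧
      ∀ k, ∀ v ∈ D.Us k, g v = (f k : V ≃ₗ[ℝ] V) v := by
  obtain ⟨f, hf⟩ := D.fact g hg
  refine ⟨f, hf, fun k v hv => ?_⟩
  rw [hf]
  exact ofFn_prod_apply _ k (fun x hx => D.act_in k _ (f k).2 x hx)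
    (fun l hl x hx => D.act_triv l k (Ne.symm hl) _ (f l).2 x hx) v hv

lemma triv_comp_of_row (D : DecompData B H) {g : V ≃ₗ[ℝ] V} {i : Fin D.p} (hg : g ∈ D.Gr i) :
    ∀ x ∈ D.comp i.succ, g x = x := by
  refine D.triv_comp fun m hm x hx => ?_
  rcases Fin.eq_zero_or_eq_succ m with rfl | ⟨k, rfl⟩
  · exact D.act_triv0 i g hg x hx
  · have hki : k ≠ i := fun hk => hm (by rw [hk])
    rw [D.fam_succ] at hx
    exact D.act_triv i k hki g hg x hx

lemma sub_mem_of_row (D : DecompData B H) {g : V ≃ₗ[ℝ] V} {i : Fin D.p} (hg : g ∈ D.Gr i)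
    (v : V) : v - g v ∈ D.Us i := by
  have hfix := D.triv_comp_of_row hg _ (D.sub_proj_mem_comp i.succ v)
  have hgv : g v = g (D.proj i.succ v) + (v - D.proj i.succ v) := by
    conv_lhs => rw [show v = D.proj i.succ v + (v - D.proj i.succ v) by abel]
    rw [map_add, hfix]
  have heq : v - g v = D.proj i.succ v - g (D.proj i.succ v) := by rw [hgv]; abel
  rw [heq]
  have h1 : D.proj i.succ v ∈ D.Us i := by rw [← D.fam_succ]; exact D.proj_mem _ v
  exact sub_mem h1 (D.act_in i g hg _ h1)

lemma row_of_sub (D : DecompData B H) {g : V ≃ₗ[ℝ] V} (hg : g ∈ H) {i : Fin D.p}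
    (hsub : ∀ v, v - g v ∈ D.Us i) : g ∈ D.Gr i := by
  obtain ⟨f, hf, hact⟩ := D.factor_action hg
  have h1 : ∀ l, l ≠ i → (f l : V ≃ₗ[ℝ] V) = 1 := by
    intro l hl
    refine D.eq_one_of_triv_fam fun m x hx => ?_
    rcases Fin.eq_zero_or_eq_succ m with rfl | ⟨k, rfl⟩
    · exact D.act_triv0 l _ (f l).2 x hx
    · rw [D.fam_succ] at hx
      by_cases hkl : k = l
      · subst hkl
        have h2 : x - g x ∈ D.Us k := by
          rw [hact k x hx]
          exact sub_mem hx (D.act_in k _ (f k).2 x hx)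
        have h3 := hsub x
        have h4 : x - g x = 0 := by
          refine D.fam_disjoint (l := k.succ) (m := i.succ) ?_ ?_ ?_
          · exact fun hc => hl (Fin.succ_injective _ hc)
          · rw [D.fam_succ]; exact h2
          · rw [D.fam_succ]; exact h3
        have h5 : g x = x := by
          have := sub_eq_zero.mp h4; exact this.symm
        rw [← hact k x hx, h5]
      · exact D.act_triv l k hkl _ (f l).2 x hx
  have hgi : ∀ v, g v = (f i : V ≃ₗ[ℝ] V) v := by
    intro v
    rw [hf]
    refine ofFn_prod_apply (W := ⊤) _ i (fun x _ => trivial) ?_ v trivial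
    intro l hl x _
    rw [h1 l hl]
    rfl
  have : g = (f i : V ≃ₗ[ℝ] V) := by
    refine LinearEquiv.toLinearMap_injective (LinearMap.ext fun v => hgi v)
  rw [this]
  exact (f i).2

lemma rows_disjoint (D : DecompData B H) {i l : Fin D.p} (hne : i ≠ l) {g : V ≃ₗ[ℝ] V}
    (hgi : g ∈ D.Gr i) (hgl : g ∈ D.Gr l) : g = 1 := by
  refine lequiv_eq_one g fun v => ?_
  have h1 := D.sub_mem_of_row hgi v
  have h2 := D.sub_mem_of_row hgl v
  have h4 : v - g v = 0 := by
    refine D.fam_disjoint (l := i.succ) (m := l.succ)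
      (fun hc => hne (Fin.succ_injective _ hc)) ?_ ?_
    · rw [D.fam_succ]; exact h1
    · rw [D.fam_succ]; exact h2
  have := sub_eq_zero.mp h4; exact this.symm

lemma row_nontrivial (D : DecompData B H) (i : Fin D.p) : ∃ g ∈ D.Gr i, g ≠ 1 := by
  by_contra hc
  push_neg at hc
  have htriv : ∀ h ∈ H, ∀ x ∈ D.Us i, h x = x := by
    intro h hh x hx
    obtain ⟨f, hf, hact⟩ := D.factor_action hh
    rw [hact i x hx, hc _ (f i).2]
    rfl
  have hle : D.Us i ≤ fixedSubspace H ⊤ := fun x hx => ⟨trivial, fun g hg => htriv g hg x hx⟩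
  have hsup_le : D.U0 ⊔ D.Us i ≤ fixedSubspace H ⊤ := sup_le D.max0.1 hle
  have hnd : NondegOn B (D.U0 ⊔ D.Us i) := by
    intro x hx hxorth
    obtain ⟨a, ha, b, hb, rfl⟩ := Submodule.mem_sup.mp hx
    have hab : ∀ u ∈ D.U0, B a u = 0 := by
      intro u hu
      have h1 : B (a + b) u = 0 := hxorth u (Submodule.mem_sup_left hu)
      have h2 : B b u = 0 :=
        D.orth' i.succ 0 (Fin.succ_ne_zero i) b (D.mem_fam_succ hb) u hu
      rw [map_add, LinearMap.add_apply, h2, add_zero] at h1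
      exact h1
    have ha0 : a = 0 := D.max0.2.1 a ha hab
    subst ha0
    rw [zero_add] at hxorth ⊢
    refine (D.indec i).2.1 b hb fun u hu => ?_
    exact hxorth u (Submodule.mem_sup_right hu)
  have heq := D.max0.2.2 (D.U0 ⊔ D.Us i) hsup_le hnd le_sup_left
  have hle2 : D.Us i ≤ D.U0 := heq ▸ le_sup_right
  have : D.Us i = ⊥ := by
    rw [eq_bot_iff]
    intro x hx
    have h0 : x ∈ D.fam 0 := hle2 hx
    have h1 : x ∈ D.fam i.succ := by rw [D.fam_succ]; exact hx
    rw [Submodule.mem_bot]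
    exact D.fam_disjoint (Fin.succ_ne_zero i) h1 h0
  exact (D.indec i).1 this

end DecompData

end HolAux3

section HolAux4

open Submodule

variable {V : Type*} [AddCommGroup V] [Module ℝ V] [FiniteDimensional ℝ V]
variable {B : LinearMap.BilinForm ℝ V} {H : Subgroup (V ≃ₗ[ℝ] V)}

lemma lequiv_apply_inv_apply (h : V ≃ₗ[ℝ] V) (v : V) : h (h⁻¹ v) = v := by
  have h0 : (h * h⁻¹) v = v := by rw [mul_inv_cancel]; rfl
  exact h0

lemma restrict_refl (hsymm : ∀ x y : V, B x y = B y x) (W : Submodule ℝ V) :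
    (B.restrict W).IsRefl := by
  intro x y h
  have h1 : B (x : V) (y : V) = 0 := by simpa using h
  have h2 : B (y : V) (x : V) = 0 := by rw [hsymm (y : V) (x : V)]; exact h1
  simpa using h2

namespace DecompData

lemma inv_Us (D : DecompData B H) {h : V ≃ₗ[ℝ] V} (hh : h ∈ H) {i : Fin D.p} {x : V}
    (hx : x ∈ D.Us i) : h x ∈ D.Us i := (D.indec i).2.2.1 h hh x hx

lemma moved_le (D : DecompData B H) (l : Fin D.p) : movedSpan H (D.Us l) ≤ D.Us l := by
  refine Submodule.span_le.mpr ?_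
  rintro x ⟨w, hw, g, hg, rfl⟩
  exact sub_mem hw (D.inv_Us hg hw)

lemma restrict_nondeg (D : DecompData B H) (l : Fin D.p) :
    (B.restrict (D.Us l)).Nondegenerate := by
  have hleft : (B.restrict (D.Us l)).SeparatingLeft := by
    intro x hx
    have h0 : (x : V) = 0 := by
      refine (D.indec l).2.1 x.1 x.2 fun u hu => ?_
      have := hx ⟨u, hu⟩
      simpa using this
    exact Subtype.ext h0
  refine ⟨hleft, fun y hy => ?_⟩
  have hinj : Function.Injective (B.restrict (D.Us l)) := by
    rw [← LinearMap.ker_eq_bot]; exact LinearMap.separatingLeft_iff_ker_eq_bot.mp hleft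
  have hsurj := (LinearMap.injective_iff_surjective_of_finrank_eq_finrank
    (Subspace.dual_finrank_eq).symm).mp hinj
  exact (Module.forall_dual_apply_eq_zero_iff ℝ y).mp fun φ => by
    obtain ⟨x, rfl⟩ := hsurj φ
    exact hy x

lemma orth_moved_eq_fixed (D : DecompData B H) (hsymm : ∀ x y : V, B x y = B y x)
    (hH : H ≤ orthogonalGroup B) (l : Fin D.p) :
    (B.restrict (D.Us l)).orthogonal ((movedSpan H (D.Us l)).comap (D.Us l).subtype)
      = (fixedSubspace H (D.Us l)).comap (D.Us l).subtype := by
  ext x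
  constructor
  · intro hx
    have hx' : ∀ s : V, s ∈ movedSpan H (D.Us l) → B s (x : V) = 0 := by
      intro s hs
      have hsW : s ∈ D.Us l := D.moved_le l hs
      have := hx ⟨s, hsW⟩ (Submodule.mem_comap.mpr hs)
      simpa using this
    refine Submodule.mem_comap.mpr ⟨x.2, fun h hh => ?_⟩
    have key : ∀ w ∈ D.Us l, B (x : V) w - B (x : V) (h w) = 0 := by
      intro w hw
      have hmem : w - h w ∈ movedSpan H (D.Us l) :=
        Submodule.subset_span ⟨w, hw, h, hh, rfl⟩
      have h1 : B (x : V) (w - h w) = 0 := by rw [hsymm]; exact hx' _ hmem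
      rw [map_sub] at h1
      exact h1
    have key2 : ∀ w ∈ D.Us l, B ((x : V) - h⁻¹ (x : V)) w = 0 := by
      intro w hw
      have e1 : B (h⁻¹ (x : V)) w = B (x : V) (h w) := by
        have e2 := ortho_apply hH hh (h⁻¹ (x : V)) w
        rw [lequiv_apply_inv_apply] at e2
        exact e2.symm
      rw [map_sub, LinearMap.sub_apply, e1]
      exact key w hw
    have hmemx : (x : V) - h⁻¹ (x : V) ∈ D.Us l := sub_mem x.2 (D.inv_Us (inv_mem hh) x.2)
    have h3 : (x : V) - h⁻¹ (x : V) = 0 := (D.indec l).2.1 _ hmemx key2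
    have h4 : h⁻¹ (x : V) = (x : V) := (sub_eq_zero.mp h3).symm
    calc h (x : V) = h (h⁻¹ (x : V)) := by rw [h4]
    _ = (x : V) := lequiv_apply_inv_apply h (x : V)
  · intro hx
    obtain ⟨hxm, hfix⟩ := Submodule.mem_comap.mp hx
    intro n hn
    have hn' : (n : V) ∈ movedSpan H (D.Us l) := Submodule.mem_comap.mp hn
    have goal : B (n : V) (x : V) = 0 := by
      refine Submodule.span_induction (p := fun s _ => B s (x : V) = 0) ?_ ?_ ?_ ?_ hn'
      · rintro s ⟨w, hw, g, hg, rfl⟩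
        have hgx : g (x : V) = (x : V) := hfix g hg
        have e1 := ortho_apply hH hg w (x : V)
        rw [hgx] at e1
        rw [map_sub, LinearMap.sub_apply, e1, sub_self]
      · simp
      · intro a b _ _ ha hb
        rw [map_add, LinearMap.add_apply, ha, hb, add_zero]
      · intro c a _ ha
        rw [map_smul, LinearMap.smul_apply, ha, smul_zero]
    simpa using goal

lemma max0_no_aniso (D : DecompData B H) (hsymm : ∀ x y : V, B x y = B y x) {z : V}
    (hz : z ∈ fixedSubspace H ⊤) (horth : ∀ n ∈ D.U0, B z n = 0) (hzz : B z z ≠ 0) :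
    False := by
  have hle : D.U0 ⊔ (ℝ ∙ z) ≤ fixedSubspace H ⊤ :=
    sup_le D.max0.1 ((Submodule.span_singleton_le_iff_mem z _).mpr hz)
  have hnd : NondegOn B (D.U0 ⊔ (ℝ ∙ z)) := by
    intro x hxW hxorth
    obtain ⟨a, ha, b, hb, rfl⟩ := Submodule.mem_sup.mp hxW
    obtain ⟨c, rfl⟩ := Submodule.mem_span_singleton.mp hb
    have ha0 : a = 0 := by
      refine D.max0.2.1 a ha fun u hu => ?_
      have h1 : B (a + c • z) u = 0 := hxorth u (Submodule.mem_sup_left hu)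
      have h2 : B z u = 0 := horth u hu
      rw [map_add, map_smul, LinearMap.add_apply, LinearMap.smul_apply, h2] at h1
      simpa using h1
    rw [ha0, zero_add] at hxorth ⊢
    have h3 : B (c • z) z = 0 :=
      hxorth z (Submodule.mem_sup_right (Submodule.mem_span_singleton_self z))
    rw [map_smul, LinearMap.smul_apply, smul_eq_mul] at h3
    have hc : c = 0 := (mul_eq_zero.mp h3).resolve_right hzz
    rw [hc, zero_smul]
  have heq := D.max0.2.2 _ hle hnd le_sup_left
  have hzU0 : z ∈ D.U0 :=
    heq ▸ (Submodule.mem_sup_right (Submodule.mem_span_singleton_self z))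
  exact hzz (horth z hzU0)

lemma fixed_isotropic (D : DecompData B H) (hsymm : ∀ x y : V, B x y = B y x) (l : Fin D.p)
    {x y : V} (hx : x ∈ fixedSubspace H (D.Us l)) (hy : y ∈ fixedSubspace H (D.Us l)) :
    B x y = 0 := by
  by_contra hxy
  have horthx : ∀ n ∈ D.U0, B x n = 0 := fun n hn =>
    D.orth' l.succ 0 (Fin.succ_ne_zero l) x (D.mem_fam_succ hx.1) n hn
  have horthy : ∀ n ∈ D.U0, B y n = 0 := fun n hn =>
    D.orth' l.succ 0 (Fin.succ_ne_zero l) y (D.mem_fam_succ hy.1) n hn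
  have hxT : x ∈ fixedSubspace H ⊤ := ⟨trivial, hx.2⟩
  have hyT : y ∈ fixedSubspace H ⊤ := ⟨trivial, hy.2⟩
  by_cases hxx : B x x = 0
  · by_cases hyy : B y y = 0
    · refine D.max0_no_aniso hsymm (z := x + y) (add_mem hxT hyT)
        (fun n hn => by rw [map_add, LinearMap.add_apply, horthx n hn, horthy n hn, add_zero])
        ?_
      have hcalc : B (x + y) (x + y) = 2 * B x y := by
        simp only [map_add, LinearMap.add_apply, hxx, hyy, hsymm y x]
        ring
      rw [hcalc]
      exact mul_ne_zero two_ne_zero hxy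
    · exact D.max0_no_aniso hsymm hyT horthy hyy
  · exact D.max0_no_aniso hsymm hxT horthx hxx

lemma fixed_le_moved (D : DecompData B H) (hsymm : ∀ x y : V, B x y = B y x)
    (hH : H ≤ orthogonalGroup B) (l : Fin D.p) :
    fixedSubspace H (D.Us l) ≤ movedSpan H (D.Us l) := by
  intro x hx
  have horth := D.orth_moved_eq_fixed hsymm hH l
  have h1 : (fixedSubspace H (D.Us l)).comap (D.Us l).subtype
      ≤ (B.restrict (D.Us l)).orthogonal ((fixedSubspace H (D.Us l)).comap (D.Us l).subtype) := by
    intro u hu n hn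
    have := D.fixed_isotropic hsymm l (Submodule.mem_comap.mp hn) (Submodule.mem_comap.mp hu)
    simpa [LinearMap.BilinForm.isOrtho_def] using this
  have h2 : (B.restrict (D.Us l)).orthogonal ((fixedSubspace H (D.Us l)).comap (D.Us l).subtype)
      = (movedSpan H (D.Us l)).comap (D.Us l).subtype := by
    rw [← horth, LinearMap.BilinForm.orthogonal_orthogonal (D.restrict_nondeg l)
      (restrict_refl hsymm (D.Us l))]
  have h3 := h2 ▸ h1
  have hmem : (⟨x, hx.1⟩ : D.Us l) ∈ (fixedSubspace H (D.Us l)).comap (D.Us l).subtype :=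
    Submodule.mem_comap.mpr hx
  exact Submodule.mem_comap.mp (h3 hmem)

lemma moved_eq_self (D : DecompData B H) (hsymm : ∀ x y : V, B x y = B y x)
    (hH : H ≤ orthogonalGroup B) (l : Fin D.p)
    (hfix : fixedSubspace H (D.Us l) = ⊥) :
    movedSpan H (D.Us l) = D.Us l := by
  have horth := D.orth_moved_eq_fixed hsymm hH l
  have hFxbot : (fixedSubspace H (D.Us l)).comap (D.Us l).subtype = ⊥ := by
    rw [eq_bot_iff]
    intro u hu
    have h0 : (u : V) ∈ fixedSubspace H (D.Us l) := Submodule.mem_comap.mp hu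
    rw [hfix] at h0
    have : (u : V) = 0 := (Submodule.mem_bot ℝ).mp h0
    simpa [Submodule.mem_bot] using Subtype.ext this
  have h2 : (movedSpan H (D.Us l)).comap (D.Us l).subtype = ⊤ := by
    have h3 := LinearMap.BilinForm.orthogonal_orthogonal (D.restrict_nondeg l)
      (restrict_refl hsymm (D.Us l)) ((movedSpan H (D.Us l)).comap (D.Us l).subtype)
    rw [← h3, horth, hFxbot, LinearMap.BilinForm.orthogonal_bot]
  refine le_antisymm (D.moved_le l) fun w hw => ?_
  have hmem : (⟨w, hw⟩ : D.Us l) ∈ (movedSpan H (D.Us l)).comap (D.Us l).subtype :=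
    h2 ▸ trivial
  exact Submodule.mem_comap.mp hmem

end DecompData

end HolAux4

section HolAux5

open Submodule

variable {V : Type*} [AddCommGroup V] [Module ℝ V] [FiniteDimensional ℝ V]
variable {B : LinearMap.BilinForm ℝ V} {H : Subgroup (V ≃ₗ[ℝ] V)}

lemma nondeg_split_left (hsymm : ∀ x y : V, B x y = B y x) {R Y W : Submodule ℝ V}
    (hsup : R ⊔ Y = W) (horth : ∀ x ∈ R, ∀ y ∈ Y, B x y = 0) (hnd : NondegOn B W) :
    NondegOn B R := by
  intro x hx hxorth
  refine hnd x (hsup ▸ Submodule.mem_sup_left hx) fun u hu => ?_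
  rw [← hsup] at hu
  obtain ⟨r, hr, y, hy, rfl⟩ := Submodule.mem_sup.mp hu
  rw [map_add, hxorth r hr, zero_add]
  exact horth x hx y hy

lemma nondeg_split_right (hsymm : ∀ x y : V, B x y = B y x) {R Y W : Submodule ℝ V}
    (hsup : R ⊔ Y = W) (horth : ∀ x ∈ R, ∀ y ∈ Y, B x y = 0) (hnd : NondegOn B W) :
    NondegOn B Y := by
  intro x hx hxorth
  refine hnd x (hsup ▸ Submodule.mem_sup_right hx) fun u hu => ?_
  rw [← hsup] at hu
  obtain ⟨r, hr, y, hy, rfl⟩ := Submodule.mem_sup.mp hu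
  rw [map_add, hxorth y hy, add_zero]
  rw [hsymm]
  exact horth r hr x hx

namespace DecompData

lemma sub_eq_proj_sub (D : DecompData B H) {g : V ≃ₗ[ℝ] V} {i : Fin D.p} (hg : g ∈ D.Gr i)
    (v : V) : v - g v = D.proj i.succ v - g (D.proj i.succ v) := by
  have hfix := D.triv_comp_of_row hg _ (D.sub_proj_mem_comp i.succ v)
  have hgv : g v = g (D.proj i.succ v) + (v - D.proj i.succ v) := by
    conv_lhs => rw [show v = D.proj i.succ v + (v - D.proj i.succ v) by abel]
    rw [map_add, hfix]
  rw [hgv]; abel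

lemma cross_component (D E : DecompData B H) {g : V ≃ₗ[ℝ] V} {i : Fin D.p}
    (hg : g ∈ D.Gr i) (j : Fin E.p) :
    ∃ g' : V ≃ₗ[ℝ] V, (g' ∈ D.Gr i ∧ g' ∈ E.Gr j) ∧ ∀ v ∈ E.Us j, g v = g' v := by
  have hgH : g ∈ H := D.grle i hg
  obtain ⟨f, hf, hact⟩ := E.factor_action hgH
  refine ⟨f j, ⟨?_, (f j).2⟩, fun v hv => hact j v hv⟩
  refine D.row_of_sub (E.grle j (f j).2) fun v => ?_
  have hw : E.proj j.succ v ∈ E.Us j := by rw [← E.fam_succ]; exact E.proj_mem _ v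
  rw [E.sub_eq_proj_sub (f j).2 v, ← hact j _ hw]
  exact D.sub_mem_of_row hg _

lemma trick (D E : DecompData B H) (hsymm : ∀ x y : V, B x y = B y x)
    (a : Fin D.p) (b : Fin E.p)
    (hinj : ∀ w ∈ E.Us b, E.proj b.succ (D.proj a.succ w) = 0 → w = 0)
    (hsurj : ∀ w ∈ E.Us b, ∃ u ∈ E.Us b, E.proj b.succ (D.proj a.succ u) = w) :
    D.Us a = Submodule.map (D.proj a.succ) (E.Us b) := by
  set R := Submodule.map (D.proj a.succ) (E.Us b) with hR
  set Y := D.Us a ⊓ LinearMap.ker (E.proj b.succ) with hY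
  have hRle : R ≤ D.Us a := by
    rintro x ⟨u, hu, rfl⟩
    rw [← D.fam_succ]; exact D.proj_mem _ u
  have hYle : Y ≤ D.Us a := inf_le_left
  have hsup : R ⊔ Y = D.Us a := by
    refine le_antisymm (sup_le hRle hYle) fun m hm => ?_
    obtain ⟨u, hu, huw⟩ := hsurj (E.proj b.succ m)
      (by rw [← E.fam_succ]; exact E.proj_mem _ m)
    refine Submodule.mem_sup.mpr ⟨D.proj a.succ u, ⟨u, hu, rfl⟩,
      m - D.proj a.succ u, Submodule.mem_inf.mpr ⟨?_, ?_⟩, by abel⟩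
    · exact sub_mem hm (by rw [← D.fam_succ]; exact D.proj_mem _ u)
    · rw [LinearMap.mem_ker, map_sub, huw, sub_self]
  have hinf : R ⊓ Y = ⊥ := by
    rw [eq_bot_iff]
    rintro x hx
    obtain ⟨hxR, hxY⟩ := Submodule.mem_inf.mp hx
    obtain ⟨u, hu, rfl⟩ := hxR
    have h0 : E.proj b.succ (D.proj a.succ u) = 0 := LinearMap.mem_ker.mp hxY.2
    rw [Submodule.mem_bot, hinj u hu h0, map_zero]
  have hinvR : InvariantUnder H R := by
    rintro h hh x ⟨u, hu, rfl⟩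
    exact ⟨h u, E.inv_Us hh hu, D.proj_equivariant hh a.succ u⟩
  have hinvY : InvariantUnder H Y := by
    intro h hh x hx
    obtain ⟨hx1, hx2⟩ := Submodule.mem_inf.mp hx
    refine Submodule.mem_inf.mpr ⟨(D.indec a).2.2.1 h hh x hx1, ?_⟩
    rw [LinearMap.mem_ker, E.proj_equivariant hh, LinearMap.mem_ker.mp hx2, map_zero]
  have horthRY : ∀ x ∈ R, ∀ y ∈ Y, B x y = 0 := by
    rintro x ⟨u, hu, rfl⟩ y hy
    obtain ⟨hy1, hy2⟩ := Submodule.mem_inf.mp hy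
    rw [D.proj_selfadj hsymm, D.proj_of_mem (D.mem_fam_succ hy1)]
    have h1 : B u y = B (E.proj b.succ u) y := by
      rw [E.proj_of_mem (E.mem_fam_succ hu)]
    rw [h1, E.proj_selfadj hsymm, LinearMap.mem_ker.mp hy2, map_zero]
  have hndR : NondegOn B R := nondeg_split_left hsymm hsup horthRY (D.indec a).2.1
  have hndY : NondegOn B Y := nondeg_split_right hsymm hsup horthRY (D.indec a).2.1
  rcases (D.indec a).2.2.2 R Y hsup hinf hinvR hinvY hndR hndY horthRY with hRbot | hYbot
  · exfalso
    obtain ⟨w, hw, hwne⟩ := Submodule.ne_bot_iff _ |>.mp (E.indec b).1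
    have hmem : D.proj a.succ w ∈ R := ⟨w, hw, rfl⟩
    rw [hRbot, Submodule.mem_bot] at hmem
    exact hwne (hinj w hw (by rw [hmem, map_zero]))
  · rw [← hsup, hYbot, sup_bot_eq]

lemma own (D E : DecompData B H) {a : Fin D.p} {b : Fin E.p}
    (heq : D.Us a = Submodule.map (D.proj a.succ) (E.Us b)) : D.Gr a ≤ E.Gr b := by
  intro g hg
  have hgH : g ∈ H := D.grle a hg
  have hcomp : ∀ l, l ≠ b → ∀ v ∈ E.Us l, g v = v := by
    intro l hl v hv
    obtain ⟨g', ⟨hg'D, hg'E⟩, hact⟩ := cross_component D E hg l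
    have hg'1 : g' = 1 := by
      refine D.eq_one_of_triv_fam fun m x hx => ?_
      rcases Fin.eq_zero_or_eq_succ m with rfl | ⟨k, rfl⟩
      · exact D.act_triv0 a g' hg'D x hx
      · rw [D.fam_succ] at hx
        by_cases hka : k = a
        · rw [hka] at hx
          rw [heq] at hx
          obtain ⟨u, hu, rfl⟩ := hx
          rw [← D.proj_equivariant (E.grle l hg'E) a.succ u,
            E.act_triv l b (Ne.symm hl) g' hg'E u hu]
        · exact D.act_triv a k hka g' hg'D x hx
    rw [hact v hv, hg'1]
    rfl
  refine E.row_of_sub hgH fun v => ?_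
  have hfix : ∀ x ∈ E.comp b.succ, g x = x := by
    refine E.triv_comp fun m hm x hx => ?_
    rcases Fin.eq_zero_or_eq_succ m with rfl | ⟨k, rfl⟩
    · exact E.fix0 hgH hx
    · rw [E.fam_succ] at hx
      exact hcomp k (fun hkb => hm (by rw [hkb])) x hx
  have hgv : g v = g (E.proj b.succ v) + (v - E.proj b.succ v) := by
    conv_lhs => rw [show v = E.proj b.succ v + (v - E.proj b.succ v) by abel]
    rw [map_add, hfix _ (E.sub_proj_mem_comp b.succ v)]
  have heq2 : v - g v = E.proj b.succ v - g (E.proj b.succ v) := by rw [hgv]; abel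
  rw [heq2]
  have h1 : E.proj b.succ v ∈ E.Us b := by rw [← E.fam_succ]; exact E.proj_mem _ v
  exact sub_mem h1 (E.inv_Us hgH h1)

lemma keyLemma (D E : DecompData B H) (hsymm : ∀ x y : V, B x y = B y x)
    (hH : H ≤ orthogonalGroup B) {a : Fin D.p} {b : Fin E.p}
    (hle : E.Gr b ≤ D.Gr a) : D.Gr a = E.Gr b := by
  have phi_id : ∀ x ∈ movedSpan H (E.Us b), E.proj b.succ (D.proj a.succ x) = x := by
    intro x hx
    refine Submodule.span_induction
      (p := fun s _ => E.proj b.succ (D.proj a.succ s) = s) ?_ ?_ ?_ ?_ hx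
    · rintro s ⟨w, hw, g, hg, rfl⟩
      obtain ⟨f, hf, hact⟩ := E.factor_action hg
      have hgb : (f b : V ≃ₗ[ℝ] V) ∈ D.Gr a := hle (f b).2
      have hs : w - g w = w - (f b : V ≃ₗ[ℝ] V) w := by rw [hact b w hw]
      rw [hs]
      have hsW : w - (f b : V ≃ₗ[ℝ] V) w ∈ E.Us b :=
        sub_mem hw (E.act_in b _ (f b).2 w hw)
      have hterm : ∀ k, k ≠ a.succ →
          E.proj b.succ (D.proj k (w - (f b : V ≃ₗ[ℝ] V) w)) = 0 := by
        intro k hk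
        have hfH : (f b : V ≃ₗ[ℝ] V) ∈ H := D.grle a hgb
        have h1 : D.proj k (w - (f b : V ≃ₗ[ℝ] V) w)
            = D.proj k w - (f b : V ≃ₗ[ℝ] V) (D.proj k w) := by
          rw [map_sub, D.proj_equivariant hfH]
        have h2 : (f b : V ≃ₗ[ℝ] V) (D.proj k w) = D.proj k w := by
          rcases Fin.eq_zero_or_eq_succ k with rfl | ⟨m, rfl⟩
          · exact D.act_triv0 a _ hgb _ (show D.proj 0 w ∈ D.U0 from D.proj_mem 0 w)
          · have hma : m ≠ a := fun hma => hk (by rw [hma])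
            exact D.act_triv a m hma _ hgb _
              (by rw [← D.fam_succ]; exact D.proj_mem _ w)
        rw [h1, h2, sub_self, map_zero]
      calc E.proj b.succ (D.proj a.succ (w - (f b : V ≃ₗ[ℝ] V) w))
          = ∑ k, E.proj b.succ (D.proj k (w - (f b : V ≃ₗ[ℝ] V) w)) :=
            (Finset.sum_eq_single a.succ (fun k _ hk => hterm k hk)
              (fun h => absurd (Finset.mem_univ _) h)).symm
      _ = E.proj b.succ (∑ k, D.proj k (w - (f b : V ≃ₗ[ℝ] V) w)) :=
            (map_sum (E.proj b.succ) _ Finset.univ).symm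
      _ = w - (f b : V ≃ₗ[ℝ] V) w := by
            rw [D.sum_proj]
            exact E.proj_of_mem (E.mem_fam_succ hsW)
    · simp
    · intro u w _ _ hu hw
      rw [map_add, map_add, hu, hw]
    · intro c u _ hu
      rw [map_smul, map_smul, hu]
  have hinj : ∀ w ∈ E.Us b, E.proj b.succ (D.proj a.succ w) = 0 → w = 0 := by
    intro w hw h0
    have hfixw : w ∈ fixedSubspace H (E.Us b) := by
      refine ⟨hw, fun h hh => ?_⟩
      obtain ⟨f, hf, hact⟩ := E.factor_action hh
      have hg'H : (f b : V ≃ₗ[ℝ] V) ∈ H := E.grle b (f b).2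
      have hs : w - (f b : V ≃ₗ[ℝ] V) w ∈ movedSpan H (E.Us b) :=
        Submodule.subset_span ⟨w, hw, (f b : V ≃ₗ[ℝ] V), hg'H, rfl⟩
      have h1 := phi_id _ hs
      have h2 : E.proj b.succ (D.proj a.succ (w - (f b : V ≃ₗ[ℝ] V) w)) = 0 := by
        rw [map_sub, D.proj_equivariant hg'H, map_sub, E.proj_equivariant hg'H, h0,
          map_zero, sub_self]
      have h3 : w - (f b : V ≃ₗ[ℝ] V) w = 0 := by rw [← h1, h2]
      rw [hact b w hw]
      exact (sub_eq_zero.mp h3).symm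
    have hwm : w ∈ movedSpan H (E.Us b) := E.fixed_le_moved hsymm hH b hfixw
    exact (phi_id w hwm).symm.trans h0
  have hsurj : ∀ w ∈ E.Us b, ∃ u ∈ E.Us b, E.proj b.succ (D.proj a.succ u) = w := by
    have hmap : ∀ x ∈ E.Us b, (E.proj b.succ ∘ₗ D.proj a.succ) x ∈ E.Us b := by
      intro x _
      rw [← E.fam_succ]
      exact E.proj_mem _ _
    set φ : (E.Us b) →ₗ[ℝ] (E.Us b) := (E.proj b.succ ∘ₗ D.proj a.succ).restrict hmap
      with hφ
    have hinj' : Function.Injective φ := by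
      intro u v huv
      have hval : E.proj b.succ (D.proj a.succ (u : V))
          = E.proj b.succ (D.proj a.succ (v : V)) := congrArg Subtype.val huv
      have h0 : E.proj b.succ (D.proj a.succ ((u : V) - (v : V))) = 0 := by
        rw [map_sub, map_sub, hval, sub_self]
      exact Subtype.ext (sub_eq_zero.mp (hinj _ (sub_mem u.2 v.2) h0))
    have hsurj' := LinearMap.injective_iff_surjective.mp hinj'
    intro w hw
    obtain ⟨u, hu⟩ := hsurj' ⟨w, hw⟩
    exact ⟨u, u.2, congrArg Subtype.val hu⟩
  exact le_antisymm (own D E (trick D E hsymm a b hinj hsurj)) hle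

end DecompData

end HolAux5

section HolAux6

open Submodule

variable {V : Type*} [AddCommGroup V] [Module ℝ V] [FiniteDimensional ℝ V]
variable {B : LinearMap.BilinForm ℝ V} {H : Subgroup (V ≃ₗ[ℝ] V)}

lemma lequiv_inv_apply_apply (h : V ≃ₗ[ℝ] V) (v : V) : h⁻¹ (h v) = v := by
  have h0 : (h⁻¹ * h) v = v := by rw [inv_mul_cancel]; rfl
  exact h0

namespace DecompData

/-- If `g ∈ H` is trivial on all `E`-summands other than `E.Us b` then `g ∈ E.Gr b`. -/
lemma mem_col_of_triv (E : DecompData B H) {g : V ≃ₗ[ℝ] V} (hgH : g ∈ H) {b : Fin E.p}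
    (htriv : ∀ l, l ≠ b → ∀ v ∈ E.Us l, g v = v) : g ∈ E.Gr b := by
  refine E.row_of_sub hgH fun v => ?_
  have hfix : ∀ x ∈ E.comp b.succ, g x = x := by
    refine E.triv_comp fun m hm x hx => ?_
    rcases Fin.eq_zero_or_eq_succ m with rfl | ⟨k, rfl⟩
    · exact E.fix0 hgH hx
    · rw [E.fam_succ] at hx
      exact htriv k (fun hkb => hm (by rw [hkb])) x hx
  have hgv : g v = g (E.proj b.succ v) + (v - E.proj b.succ v) := by
    conv_lhs => rw [show v = E.proj b.succ v + (v - E.proj b.succ v) by abel]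
    rw [map_add, hfix _ (E.sub_proj_mem_comp b.succ v)]
  have heq2 : v - g v = E.proj b.succ v - g (E.proj b.succ v) := by rw [hgv]; abel
  rw [heq2]
  have h1 : E.proj b.succ v ∈ E.Us b := by rw [← E.fam_succ]; exact E.proj_mem _ v
  exact sub_mem h1 (E.inv_Us hgH h1)

/-- The span of `v - g v` for `g` in the "cell" `D.Gr a ⊓ E.Gr j`. -/
def cellSpan (D E : DecompData B H) (a : Fin D.p) (j : Fin E.p) : Submodule ℝ V :=
  Submodule.span ℝ {x | ∃ v : V, ∃ g : V ≃ₗ[ℝ] V,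
    (g ∈ D.Gr a ∧ g ∈ E.Gr j) ∧ x = v - g v}

lemma cellSpan_le (D E : DecompData B H) (a : Fin D.p) (j : Fin E.p) :
    cellSpan D E a j ≤ D.Us a ⊓ E.Us j := by
  refine Submodule.span_le.mpr ?_
  rintro x ⟨v, g, ⟨hgD, hgE⟩, rfl⟩
  exact Submodule.mem_inf.mpr ⟨D.sub_mem_of_row hgD v, E.sub_mem_of_row hgE v⟩

lemma cellSpan_inv (D E : DecompData B H) (a : Fin D.p) (j : Fin E.p) :
    InvariantUnder H (cellSpan D E a j) := by
  intro h hh x hx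
  refine Submodule.span_induction (p := fun x _ => h x ∈ cellSpan D E a j) ?_ ?_ ?_ ?_ hx
  · rintro s ⟨v, g, ⟨hgD, hgE⟩, rfl⟩
    have hconj : (h * g * h⁻¹) (h v) = h (g v) := by
      show h (g (h⁻¹ (h v))) = h (g v)
      rw [lequiv_inv_apply_apply]
    have hmem : h v - (h * g * h⁻¹) (h v) ∈ cellSpan D E a j := by
      refine Submodule.subset_span ⟨h v, h * g * h⁻¹,
        ⟨D.norm a h hh g hgD, E.norm j h hh g hgE⟩, rfl⟩
    rw [hconj] at hmem
    rw [map_sub]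
    exact hmem
  · show h 0 ∈ cellSpan D E a j
    rw [map_zero]; exact Submodule.zero_mem _
  · intro u w _ _ hu hw
    show h (u + w) ∈ cellSpan D E a j
    rw [map_add]; exact Submodule.add_mem _ hu hw
  · intro c u _ hu
    show h (c • u) ∈ cellSpan D E a j
    rw [map_smul]; exact Submodule.smul_mem _ c hu

lemma goodRow_L0 (D E : DecompData B H) (hsymm : ∀ x y : V, B x y = B y x)
    (hH : H ≤ orthogonalGroup B) (a : Fin D.p)
    (hfix : fixedSubspace H (D.Us a) = ⊥) : ∃ b, D.Gr a = E.Gr b := by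
  -- find a nontrivial cell
  obtain ⟨g0, hg0, hg0ne⟩ := D.row_nontrivial a
  have hex : ∃ v0 : V, g0 v0 ≠ v0 := by
    by_contra hc
    push_neg at hc
    exact hg0ne (lequiv_eq_one g0 hc)
  obtain ⟨v0, hv0⟩ := hex
  have hk : ∃ k : Fin (E.p + 1), g0 (E.proj k v0) ≠ E.proj k v0 := by
    by_contra hc
    push_neg at hc
    refine hv0 ?_
    conv_lhs => rw [show v0 = ∑ k, E.proj k v0 from (E.sum_proj v0).symm]
    rw [map_sum]
    calc (∑ k, g0 (E.proj k v0)) = ∑ k, E.proj k v0 :=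
      Finset.sum_congr rfl fun k _ => hc k
    _ = v0 := E.sum_proj v0
  obtain ⟨k, hkne⟩ := hk
  have hk0 : k ≠ 0 := by
    intro hk0
    subst hk0
    exact hkne (E.fix0 (D.grle a hg0) (show E.proj 0 v0 ∈ E.U0 from E.proj_mem 0 v0))
  obtain ⟨j1, rfl⟩ := Fin.eq_succ_of_ne_zero hk0
  have hu : E.proj j1.succ v0 ∈ E.Us j1 := by rw [← E.fam_succ]; exact E.proj_mem _ v0
  obtain ⟨g1, ⟨hg1D, hg1E⟩, hact1⟩ := cross_component D E hg0 j1
  have hg1ne : g1 (E.proj j1.succ v0) ≠ E.proj j1.succ v0 := by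
    rw [← hact1 _ hu]; exact hkne
  -- the two pieces
  set U1 := cellSpan D E a j1 with hU1
  set U2 := ⨆ j, ⨆ _ : j ≠ j1, cellSpan D E a j with hU2
  have hU1le : U1 ≤ D.Us a := fun x hx => (Submodule.mem_inf.mp (cellSpan_le D E a j1 hx)).1
  have hU2le : U2 ≤ D.Us a := by
    refine iSup_le fun j => iSup_le fun _ => ?_
    exact fun x hx => (Submodule.mem_inf.mp (cellSpan_le D E a j hx)).1
  have hmoved : D.Us a ≤ ⨆ j, cellSpan D E a j := by
    rw [← D.moved_eq_self hsymm hH a hfix]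
    refine Submodule.span_le.mpr ?_
    rintro x ⟨w, hw, g, hg, rfl⟩
    obtain ⟨f, hf, hact⟩ := D.factor_action hg
    have hsub : w - g w = w - (f a : V ≃ₗ[ℝ] V) w := by rw [hact a w hw]
    rw [hsub]
    have hfH : (f a : V ≃ₗ[ℝ] V) ∈ H := D.grle a (f a).2
    rw [show w - (f a : V ≃ₗ[ℝ] V) w
        = ∑ k, E.proj k (w - (f a : V ≃ₗ[ℝ] V) w) from (E.sum_proj _).symm]
    refine Submodule.sum_mem _ fun k _ => ?_
    rcases Fin.eq_zero_or_eq_succ k with rfl | ⟨j, rfl⟩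
    · have h1 : E.proj 0 ((f a : V ≃ₗ[ℝ] V) w) = (f a : V ≃ₗ[ℝ] V) (E.proj 0 w) :=
        E.proj_equivariant hfH 0 w
      have h2 : (f a : V ≃ₗ[ℝ] V) (E.proj 0 w) = E.proj 0 w :=
        E.fix0 hfH (show E.proj 0 w ∈ E.U0 from E.proj_mem 0 w)
      rw [map_sub, h1, h2, sub_self]
      exact Submodule.zero_mem _
    · obtain ⟨g', ⟨hg'D, hg'E⟩, hact'⟩ := cross_component D E (f a).2 j
      have huj : E.proj j.succ w ∈ E.Us j := by rw [← E.fam_succ]; exact E.proj_mem _ w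
      have h1 : E.proj j.succ (w - (f a : V ≃ₗ[ℝ] V) w)
          = E.proj j.succ w - g' (E.proj j.succ w) := by
        rw [map_sub, E.proj_equivariant hfH, hact' _ huj]
      rw [h1]
      exact Submodule.mem_iSup_of_mem j
        (Submodule.subset_span ⟨E.proj j.succ w, g', ⟨hg'D, hg'E⟩, rfl⟩)
  have hsup : U1 ⊔ U2 = D.Us a := by
    refine le_antisymm (sup_le hU1le hU2le) ?_
    refine le_trans hmoved (iSup_le fun j => ?_)
    by_cases hj : j = j1
    · subst hj; exact le_sup_left
    · exact le_trans (le_iSup₂ (f := fun j (_ : j ≠ j1) => cellSpan D E a j) j hj) le_sup_right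
  have horth : ∀ x ∈ U1, ∀ y ∈ U2, B x y = 0 := by
    intro x hx y hy
    have hx' : x ∈ E.fam j1.succ :=
      E.mem_fam_succ (Submodule.mem_inf.mp (cellSpan_le D E a j1 hx)).2
    have hy' : y ∈ E.comp j1.succ := by
      revert y
      refine fun y hy => ?_
      have hle2 : U2 ≤ E.comp j1.succ := by
        refine iSup_le fun j => iSup_le fun hj => fun z hz => ?_
        refine E.mem_comp_of_mem (fun hc => hj (Fin.succ_injective _ hc)) ?_
        exact E.mem_fam_succ (Submodule.mem_inf.mp (cellSpan_le D E a j hz)).2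
      exact hle2 hy
    exact E.orth_comp hx' hy'
  have hndU1 : NondegOn B U1 := nondeg_split_left hsymm hsup horth (D.indec a).2.1
  have hndU2 : NondegOn B U2 := nondeg_split_right hsymm hsup horth (D.indec a).2.1
  have hinf : U1 ⊓ U2 = ⊥ := by
    rw [eq_bot_iff]
    intro x hx
    obtain ⟨hx1, hx2⟩ := Submodule.mem_inf.mp hx
    rw [Submodule.mem_bot]
    exact hndU1 x hx1 fun u hu => by rw [hsymm]; exact horth u hu x hx2
  have hinvU1 : InvariantUnder H U1 := cellSpan_inv D E a j1
  have hinvU2 : InvariantUnder H U2 := by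
    intro h hh x hx
    refine Submodule.iSup_induction (motive := fun x => h x ∈ U2)
      (fun j => ⨆ _ : j ≠ j1, cellSpan D E a j) hx ?_ ?_ ?_
    · intro j x hxj
      have hxj' : x ∈ ⨆ _ : j ≠ j1, cellSpan D E a j := hxj
      by_cases hj : j ≠ j1
      · rw [iSup_pos hj] at hxj'
        have : h x ∈ cellSpan D E a j := cellSpan_inv D E a j h hh x hxj'
        exact Submodule.mem_iSup_of_mem j (by rw [iSup_pos hj]; exact this)
      · rw [iSup_neg hj] at hxj'
        simp [(Submodule.mem_bot ℝ).mp hxj']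
    · simp
    · intro x y hx hy
      rw [map_add]; exact Submodule.add_mem _ hx hy
  rcases (D.indec a).2.2.2 U1 U2 hsup hinf hinvU1 hinvU2 hndU1 hndU2 horth with h1 | h2
  · exfalso
    have hmem : E.proj j1.succ v0 - g1 (E.proj j1.succ v0) ∈ U1 :=
      Submodule.subset_span ⟨E.proj j1.succ v0, g1, ⟨hg1D, hg1E⟩, rfl⟩
    rw [h1, Submodule.mem_bot, sub_eq_zero] at hmem
    exact hg1ne hmem.symm
  · -- all other cells vanish, so D.Gr a ≤ E.Gr j1
    have hle : D.Gr a ≤ E.Gr j1 := by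
      intro g hg
      refine E.mem_col_of_triv (D.grle a hg) fun l hl v hv => ?_
      obtain ⟨g', ⟨hg'D, hg'E⟩, hact'⟩ := cross_component D E hg l
      have hmem : v - g' v ∈ cellSpan D E a l :=
        Submodule.subset_span ⟨v, g', ⟨hg'D, hg'E⟩, rfl⟩
      have hmem2 : v - g' v ∈ U2 := by
        refine Submodule.mem_iSup_of_mem l ?_
        rw [iSup_pos hl]
        exact hmem
      rw [h2, Submodule.mem_bot, sub_eq_zero] at hmem2
      rw [hact' v hv, ← hmem2]
    exact ⟨j1, (keyLemma E D hsymm hH hle).symm⟩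

end DecompData

end HolAux6

section HolAux7

open Submodule

variable {V : Type*} [AddCommGroup V] [Module ℝ V] [FiniteDimensional ℝ V]
variable {B : LinearMap.BilinForm ℝ V} {H : Subgroup (V ≃ₗ[ℝ] V)}

namespace DecompData

/-- An endomorphism of the summand `D.Us a` is `H`-equivariant. -/
def Equi (D : DecompData B H) (a : Fin D.p) (φ : Module.End ℝ (D.Us a)) : Prop :=
  ∀ (h : V ≃ₗ[ℝ] V) (hh : h ∈ H) (x : (D.Us a)),
    (φ ⟨h ↑x, D.inv_Us hh x.2⟩ : V) = h ↑(φ x)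

variable {D : DecompData B H} {a : Fin D.p}

lemma equi_add {φ ψ : Module.End ℝ (D.Us a)} (hφ : D.Equi a φ) (hψ : D.Equi a ψ) :
    D.Equi a (φ + ψ) := by
  intro h hh x
  have h1 := hφ h hh x
  have h2 := hψ h hh x
  show ((φ + ψ) ⟨h ↑x, D.inv_Us hh x.2⟩ : V) = h ↑((φ + ψ) x)
  rw [LinearMap.add_apply, LinearMap.add_apply]
  push_cast [Submodule.coe_add]
  rw [h1, h2, map_add]

lemma equi_zero : D.Equi a (0 : Module.End ℝ (D.Us a)) := by
  intro h hh x
  show ((0 : (D.Us a)) : V) = h ↑(0 : (D.Us a))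
  simp

lemma equi_sum {ι : Type*} (s : Finset ι) (c : ι → Module.End ℝ (D.Us a))
    (hc : ∀ k ∈ s, D.Equi a (c k)) : D.Equi a (∑ k ∈ s, c k) := by
  classical
  induction s using Finset.induction_on with
  | empty => rw [Finset.sum_empty]; exact equi_zero
  | @insert i0 t hnot ih =>
    rw [Finset.sum_insert hnot]
    exact equi_add (hc i0 (Finset.mem_insert_self i0 t))
      (ih fun k hk => hc k (Finset.mem_insert_of_mem hk))

lemma equi_comp {φ ψ : Module.End ℝ (D.Us a)} (hφ : D.Equi a φ) (hψ : D.Equi a ψ) :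
    D.Equi a (φ * ψ) := by
  intro h hh x
  show (φ (ψ ⟨h ↑x, D.inv_Us hh x.2⟩) : V) = h ↑(φ (ψ x))
  have h2 : ψ ⟨h ↑x, D.inv_Us hh x.2⟩ = ⟨h ↑(ψ x), D.inv_Us hh (ψ x).2⟩ :=
    Subtype.ext (hψ h hh x)
  rw [h2]
  exact hφ h hh (ψ x)

lemma equi_one : D.Equi a (1 : Module.End ℝ (D.Us a)) := fun h hh x => rfl

lemma equi_pow {φ : Module.End ℝ (D.Us a)} (hφ : D.Equi a φ) (n : ℕ) :
    D.Equi a (φ ^ n) := by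
  induction n with
  | zero => rw [pow_zero]; exact equi_one
  | succ n ih => rw [pow_succ]; exact equi_comp ih hφ

lemma equi_inv {φ : Module.End ℝ (D.Us a)} (hφ : D.Equi a φ) (hu : IsUnit φ) :
    D.Equi a (hu.unit⁻¹).val := by
  intro h hh x
  set ψ : Module.End ℝ (D.Us a) := (hu.unit⁻¹).val
  have hφψ : ∀ y, φ (ψ y) = y := fun y => by
    have : (φ * ψ) y = (1 : Module.End ℝ (D.Us a)) y := by
      rw [show φ * ψ = 1 by
        rw [show φ = ↑hu.unit from hu.unit_spec.symm]; exact hu.unit.mul_inv]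
    exact this
  have hψφ : ∀ y, ψ (φ y) = y := fun y => by
    have : (ψ * φ) y = (1 : Module.End ℝ (D.Us a)) y := by
      rw [show ψ * φ = 1 by
        rw [show φ = ↑hu.unit from hu.unit_spec.symm]; exact hu.unit.inv_mul]
    exact this
  set u0 := ψ x
  have hx : φ u0 = x := hφψ x
  have hy : φ ⟨h ↑u0, D.inv_Us hh u0.2⟩ = ⟨h ↑x, D.inv_Us hh x.2⟩ := by
    refine Subtype.ext ?_
    rw [hφ h hh u0, hx]
  have : ψ ⟨h ↑x, D.inv_Us hh x.2⟩ = ⟨h ↑u0, D.inv_Us hh u0.2⟩ := by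
    rw [← hy, hψφ]
  rw [this]

lemma fitting (D : DecompData B H) (a : Fin D.p)
    (hnnd : NoNontrivialDecomp H (D.Us a)) (φ : Module.End ℝ (D.Us a))
    (hφ : D.Equi a φ) : IsUnit φ ∨ IsNilpotent φ := by
  obtain ⟨n, hn1, hcompl⟩ : ∃ n, 1 ≤ n ∧
      IsCompl (LinearMap.ker (φ ^ n)) (LinearMap.range (φ ^ n)) := by
    obtain ⟨n, hn⟩ := ((Filter.eventually_ge_atTop 1).and
      φ.eventually_isCompl_ker_pow_range_pow).exists
    exact ⟨n, hn.1, hn.2⟩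
  have hpow : D.Equi a (φ ^ n) := equi_pow hφ n
  set U1 := (LinearMap.ker (φ ^ n)).map (D.Us a).subtype with hU1
  set U2 := (LinearMap.range (φ ^ n)).map (D.Us a).subtype with hU2
  have hinv1 : InvariantUnder H U1 := by
    rintro h hh x ⟨u, hu, rfl⟩
    have hu' : (φ ^ n) u = 0 := hu
    refine ⟨⟨h ↑u, D.inv_Us hh u.2⟩, LinearMap.mem_ker.mpr ?_, rfl⟩
    refine Subtype.ext ?_
    rw [hpow h hh u, hu']
    simp
  have hinv2 : InvariantUnder H U2 := by
    rintro h hh x ⟨w, ⟨u, hu⟩, rfl⟩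
    refine ⟨⟨h ↑w, D.inv_Us hh w.2⟩, ⟨⟨h ↑u, D.inv_Us hh u.2⟩, ?_⟩, rfl⟩
    refine Subtype.ext ?_
    rw [hpow h hh u, hu]
  have hsup : U1 ⊔ U2 = D.Us a := by
    rw [hU1, hU2, ← Submodule.map_sup, hcompl.sup_eq_top, Submodule.map_subtype_top]
  have hinf : U1 ⊓ U2 = ⊥ := by
    rw [hU1, hU2, ← Submodule.map_inf _ (Submodule.injective_subtype (D.Us a)),
      disjoint_iff.mp hcompl.disjoint, Submodule.map_bot]
  rcases hnnd U1 U2 hsup hinf hinv1 hinv2 with h1 | h2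
  · left
    have hker : LinearMap.ker (φ ^ n) = ⊥ :=
      Submodule.map_injective_of_injective (Submodule.injective_subtype (D.Us a))
        (by rw [Submodule.map_bot, ← hU1]; exact h1)
    have hinj : Function.Injective φ := by
      have hle : LinearMap.ker φ ≤ LinearMap.ker (φ ^ n) := by
        obtain ⟨m, rfl⟩ := Nat.exists_eq_add_of_le hn1
        intro x hx
        rw [LinearMap.mem_ker] at hx ⊢
        rw [show 1 + m = m + 1 by ring, pow_succ, Module.End.mul_apply, hx, map_zero]
      rw [← LinearMap.ker_eq_bot]
      exact le_bot_iff.mp (hker ▸ hle)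
    exact (Module.End.isUnit_iff φ).mpr
      ⟨hinj, LinearMap.injective_iff_surjective.mp hinj⟩
  · right
    refine ⟨n, ?_⟩
    have hrange : LinearMap.range (φ ^ n) = ⊥ :=
      Submodule.map_injective_of_injective (Submodule.injective_subtype (D.Us a))
        (by rw [Submodule.map_bot, ← hU2]; exact h2)
    exact LinearMap.range_eq_bot.mp hrange

lemma exists_unit (D : DecompData B H) (a : Fin D.p)
    (hnnd : NoNontrivialDecomp H (D.Us a)) {ι : Type*} [DecidableEq ι] (s : Finset ι)
    (c : ι → Module.End ℝ (D.Us a)) (hequi : ∀ k ∈ s, D.Equi a (c k))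
    (hsum : IsUnit (∑ k ∈ s, c k)) : ∃ k ∈ s, IsUnit (c k) := by
  classical
  induction s using Finset.induction_on with
  | empty =>
    exfalso
    rw [Finset.sum_empty] at hsum
    have hbij := (Module.End.isUnit_iff _).mp hsum
    obtain ⟨w, hw, hwne⟩ := (Submodule.ne_bot_iff _).mp (D.indec a).1
    obtain ⟨u, hu⟩ := hbij.2 ⟨w, hw⟩
    have hval : w = 0 := by
      have := congrArg Subtype.val hu
      simpa using this.symm
    exact hwne hval
  | @insert i0 t hnot ih =>
    rw [Finset.sum_insert hnot] at hsum
    by_cases hci : IsUnit (c i0)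
    · exact ⟨i0, Finset.mem_insert_self i0 t, hci⟩
    · set u := hsum.unit with hudef
      have huval : (u : Module.End ℝ (D.Us a)) = c i0 + ∑ k ∈ t, c k := hsum.unit_spec
      have hequi_rest : D.Equi a (∑ k ∈ t, c k) :=
        equi_sum t c fun k hk => hequi k (Finset.mem_insert_of_mem hk)
      have hequi_u : D.Equi a (u : Module.End ℝ (D.Us a)) := by
        rw [huval]
        exact equi_add (hequi i0 (Finset.mem_insert_self i0 t)) hequi_rest
      have hequi_uinv : D.Equi a (u⁻¹).val := by
        have := equi_inv hequi_u u.isUnit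
        have hcast : (u.isUnit.unit : (Module.End ℝ (D.Us a))ˣ) = u := Units.ext u.isUnit.unit_spec
        rwa [hcast] at this
      set f := (u⁻¹).val * c i0 with hfdef
      have hequi_f : D.Equi a f :=
        equi_comp hequi_uinv (hequi i0 (Finset.mem_insert_self i0 t))
      have hfnotunit : ¬ IsUnit f := by
        intro hf
        refine hci ?_
        have : c i0 = (u : Module.End ℝ (D.Us a)) * f := by
          rw [hfdef, ← mul_assoc, u.mul_inv, one_mul]
        rw [this]
        exact u.isUnit.mul hf
      have hfnil : IsNilpotent f := (fitting D a hnnd f hequi_f).resolve_left hfnotunit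
      have hg : IsUnit (1 - f) := hfnil.isUnit_one_sub
      have h1 : (1 : Module.End ℝ (D.Us a)) - f
          = (u⁻¹).val * ∑ k ∈ t, c k := by
        calc (1 : Module.End ℝ (D.Us a)) - f
            = (u⁻¹).val * u.val - (u⁻¹).val * c i0 := by
              rw [u.inv_mul]
        _ = (u⁻¹).val * (u.val - c i0) := by
              rw [mul_sub]
        _ = (u⁻¹).val * ∑ k ∈ t, c k := by rw [huval, add_sub_cancel_left]
      have hsum' : IsUnit (∑ k ∈ t, c k) := by
        have heq : (∑ k ∈ t, c k) = u.val * (1 - f) := by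
          rw [h1, ← mul_assoc, u.mul_inv, one_mul]
        rw [heq]
        exact u.isUnit.mul hg
      obtain ⟨k, hk, hku⟩ := ih (fun k hk => hequi k (Finset.mem_insert_of_mem hk)) hsum'
      exact ⟨k, Finset.mem_insert_of_mem hk, hku⟩

lemma goodRow_indec (D E : DecompData B H) (hsymm : ∀ x y : V, B x y = B y x)
    (hH : H ≤ orthogonalGroup B) (a : Fin D.p)
    (hnnd : NoNontrivialDecomp H (D.Us a)) : ∃ b, D.Gr a = E.Gr b := by
  classical
  have hmap : ∀ k : Fin (E.p + 1), ∀ x ∈ D.Us a,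
      (D.proj a.succ ∘ₗ E.proj k) x ∈ D.Us a := by
    intro k x _
    rw [← D.fam_succ]
    exact D.proj_mem _ _
  set c : Fin (E.p + 1) → Module.End ℝ (D.Us a) :=
    fun k => (D.proj a.succ ∘ₗ E.proj k).restrict (hmap k) with hc
  have hcval : ∀ k (x : (D.Us a)), ((c k x : V)) = D.proj a.succ (E.proj k ↑x) :=
    fun k x => rfl
  have hequi : ∀ k, D.Equi a (c k) := by
    intro k h hh x
    rw [hcval, hcval]
    rw [E.proj_equivariant hh, D.proj_equivariant hh]
  have hsum : ∑ k, c k = 1 := by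
    refine LinearMap.ext fun x => Subtype.ext ?_
    have h1 : ((∑ k, c k) x : V) = ∑ k, ((c k x : V)) := by
      rw [LinearMap.sum_apply]
      exact AddSubmonoidClass.coe_finset_sum _ _
    rw [h1]
    have h2 : ∑ k, ((c k x : V)) = D.proj a.succ (∑ k, E.proj k (x : V)) := by
      rw [map_sum]
      exact Finset.sum_congr rfl fun k _ => hcval k x
    rw [h2, E.sum_proj, D.proj_of_mem (D.mem_fam_succ x.2)]
    rfl
  have hone : IsUnit (∑ k, c k) := by rw [hsum]; exact isUnit_one
  obtain ⟨k, _, hk⟩ := exists_unit D a hnnd Finset.univ c (fun k _ => hequi k) hone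
  have hkne : k ≠ 0 := by
    intro hk0
    subst hk0
    obtain ⟨g0, hg0, hg0ne⟩ := D.row_nontrivial a
    have hg0H := D.grle a hg0
    refine hg0ne ?_
    have hbij := (Module.End.isUnit_iff _).mp hk
    have htrivUs : ∀ x ∈ D.Us a, g0 x = x := by
      intro x hx
      obtain ⟨u, hu⟩ := hbij.2 ⟨x, hx⟩
      have h1 : (c 0 ⟨g0 ↑u, D.inv_Us hg0H u.2⟩ : V) = g0 ↑(c 0 u) := hequi 0 g0 hg0H u
      have h2 : (c 0 ⟨g0 ↑u, D.inv_Us hg0H u.2⟩ : V) = (c 0 u : V) := by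
        rw [hcval, hcval, E.proj_equivariant hg0H,
          E.fix0 hg0H (show E.proj 0 (u : V) ∈ E.U0 from E.proj_mem 0 (u : V))]
      have h3 : g0 ↑(c 0 u) = ((c 0 u : V)) := by rw [← h1, h2]
      rw [hu] at h3
      exact h3
    refine D.eq_one_of_triv_fam fun m x hx => ?_
    rcases Fin.eq_zero_or_eq_succ m with rfl | ⟨i, rfl⟩
    · exact D.fix0 hg0H hx
    · rw [D.fam_succ] at hx
      by_cases hia : i = a
      · rw [hia] at hx; exact htrivUs x hx
      · exact D.act_triv a i hia g0 hg0 x hx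
  obtain ⟨b, rfl⟩ := Fin.eq_succ_of_ne_zero hkne
  have hbij := (Module.End.isUnit_iff _).mp hk
  have hinj : ∀ w ∈ D.Us a, D.proj a.succ (E.proj b.succ w) = 0 → w = 0 := by
    intro w hw h0
    have hc0 : c b.succ ⟨w, hw⟩ = 0 := by
      refine Subtype.ext ?_
      rw [hcval]
      exact h0
    have := hbij.1 (a₁ := ⟨w, hw⟩) (a₂ := 0) (by rw [hc0, map_zero])
    exact congrArg Subtype.val this
  have hsurj : ∀ w ∈ D.Us a, ∃ u ∈ D.Us a, D.proj a.succ (E.proj b.succ u) = w := by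
    intro w hw
    obtain ⟨u, hu⟩ := hbij.2 ⟨w, hw⟩
    refine ⟨↑u, u.2, ?_⟩
    have := congrArg Subtype.val hu
    rw [hcval] at this
    exact this
  have heq := trick E D hsymm b a hinj hsurj
  have hle : E.Gr b ≤ D.Gr a := own E D heq
  exact ⟨b, keyLemma D E hsymm hH hle⟩

end DecompData

end HolAux7

section HolAux8

open Submodule

variable {V : Type*} [AddCommGroup V] [Module ℝ V] [FiniteDimensional ℝ V]
variable {B : LinearMap.BilinForm ℝ V} {H : Subgroup (V ≃ₗ[ℝ] V)}

namespace DecompData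

theorem main (D E : DecompData B H) (hsymm : ∀ x y : V, B x y = B y x)
    (hH : H ≤ orthogonalGroup B)
    (hone : ∃! j : Fin D.p,
      fixedSubspace H (D.Us j) ≠ ⊥ ∧ ¬ NoNontrivialDecomp H (D.Us j)) :
    D.p = E.p ∧ ∃ σ : Fin D.p ≃ Fin E.p, ∀ i, D.Gr i = E.Gr (σ i) := by
  classical
  obtain ⟨j0, -, huniq⟩ := hone
  have hgood : ∀ i : Fin D.p, i ≠ j0 → ∃ b, D.Gr i = E.Gr b := by
    intro i hi
    have hnotbad : ¬ (fixedSubspace H (D.Us i) ≠ ⊥ ∧ ¬ NoNontrivialDecomp H (D.Us i)) :=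
      fun hcon => hi (huniq i hcon)
    push_neg at hnotbad
    by_cases hfix : fixedSubspace H (D.Us i) = ⊥
    · exact goodRow_L0 D E hsymm hH i hfix
    · exact goodRow_indec D E hsymm hH i (hnotbad hfix)
  choose cgood hcgood using hgood
  have hexists_unmatched : ∃ j : Fin E.p, ∀ i, ∀ hi : i ≠ j0, cgood i hi ≠ j := by
    by_contra hcon
    push_neg at hcon
    obtain ⟨g, hg, hgne⟩ := D.row_nontrivial j0
    refine hgne (E.eq_one_of_triv_fam fun m x hx => ?_)
    rcases Fin.eq_zero_or_eq_succ m with rfl | ⟨j, rfl⟩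
    · exact E.fix0 (D.grle j0 hg) hx
    · rw [E.fam_succ] at hx
      obtain ⟨i, hi, hij⟩ := hcon j
      obtain ⟨g', ⟨hg'D, hg'E⟩, hact⟩ := cross_component D E hg j
      have hEj : g' ∈ D.Gr i := by
        have h1 : g' ∈ E.Gr (cgood i hi) := by rw [hij]; exact hg'E
        rw [hcgood i hi]
        exact h1
      have hg'1 : g' = 1 := D.rows_disjoint (Ne.symm hi) hg'D hEj
      rw [hact x hx, hg'1]
      rfl
  obtain ⟨jstar, hjstar⟩ := hexists_unmatched
  have hlestar : E.Gr jstar ≤ D.Gr j0 := by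
    intro g hg
    have hgH := E.grle jstar hg
    refine D.mem_col_of_triv hgH fun k hk v hv => ?_
    obtain ⟨g', ⟨hg'E, hg'D⟩, hact⟩ := cross_component E D hg k
    have h1 : g' ∈ E.Gr (cgood k hk) := by rw [← hcgood k hk]; exact hg'D
    have hg'1 : g' = 1 := E.rows_disjoint (hjstar k hk) h1 hg'E
    rw [hact v hv, hg'1]
    rfl
  have hj0 : D.Gr j0 = E.Gr jstar := keyLemma D E hsymm hH hlestar
  have hcdef : ∀ i, ∃ j : Fin E.p, D.Gr i = E.Gr j := by
    intro i
    by_cases hi : i = j0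
    · exact ⟨jstar, hi ▸ hj0⟩
    · exact ⟨cgood i hi, hcgood i hi⟩
  choose c hc using hcdef
  have hinj : Function.Injective c := by
    intro i i' hii
    by_contra hne
    obtain ⟨g, hg, hgne⟩ := D.row_nontrivial i
    have hg' : g ∈ D.Gr i' := by
      rw [hc i', ← hii, ← hc i]
      exact hg
    exact hgne (D.rows_disjoint hne hg hg')
  have hsurjc : Function.Surjective c := by
    intro j
    by_contra hjn
    push_neg at hjn
    obtain ⟨g, hg, hgne⟩ := E.row_nontrivial j
    refine hgne (D.eq_one_of_triv_fam fun m x hx => ?_)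
    rcases Fin.eq_zero_or_eq_succ m with rfl | ⟨k, rfl⟩
    · exact D.fix0 (E.grle j hg) hx
    · rw [D.fam_succ] at hx
      obtain ⟨g', ⟨hg'E, hg'D⟩, hact⟩ := cross_component E D hg k
      have h1 : g' ∈ E.Gr (c k) := by rw [← hc k]; exact hg'D
      have hg'1 : g' = 1 := E.rows_disjoint (hjn k) h1 hg'E
      rw [hact x hx, hg'1]
      rfl
  have hbij : Function.Bijective c := ⟨hinj, hsurjc⟩
  refine ⟨?_, Equiv.ofBijective c hbij, fun i => hc i⟩
  have hcard := Fintype.card_of_bijective hbij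
  simpa using hcard

end DecompData

end HolAux8


/-- If in the decomposition `V = M⁰ ⊕ M¹ ⊕ ⋯ ⊕ M^p` there is exactly one
index `j` with `(M^j)^H ≠ 0` and `M^j` admitting a nontrivial decomposition into
`H`-invariant subspaces, then for any two such decompositions the corresponding internal
direct-product decompositions `H = H¹ × ⋯ × H^p = G¹ × ⋯ × G^q` of `H` into
indecomposable normal subgroups agree up to the order: `p = q` and, after a permutation,
`H^i = G^i`. -/
theorem holonomy_factors_unique_one_bad_summand
    {V : Type*} [AddCommGroup V] [Module ℝ V] [FiniteDimensional ℝ V]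
    (B : LinearMap.BilinForm ℝ V)
    (hsymm : ∀ x y : V, B x y = B y x) (hnd : NondegOn B ⊤)
    (H : Subgroup (V ≃ₗ[ℝ] V)) (hH : H ≤ orthogonalGroup B)
    (hBL : BorelLichnerowicz B H)
    (p q : ℕ) (M0 N0 : Submodule ℝ V)
    (M : Fin p → Submodule ℝ V) (N : Fin q → Submodule ℝ V)
    (hMmax : IsMaxNondegIn B (fixedSubspace H ⊤) M0) (hM0inv : InvariantUnder H M0)
    (hNmax : IsMaxNondegIn B (fixedSubspace H ⊤) N0) (hN0inv : InvariantUnder H N0)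
    (hMind : iSupIndep (Fin.cons M0 M : Fin (p + 1) → Submodule ℝ V))
    (hMsup : iSup (Fin.cons M0 M : Fin (p + 1) → Submodule ℝ V) = ⊤)
    (hMorth : ∀ i j : Fin (p + 1), i ≠ j →
      ∀ x ∈ (Fin.cons M0 M : Fin (p + 1) → Submodule ℝ V) i,
      ∀ y ∈ (Fin.cons M0 M : Fin (p + 1) → Submodule ℝ V) j, B x y = 0)
    (hMindec : ∀ i, IsIndecomposable B H (M i))
    (hNind : iSupIndep (Fin.cons N0 N : Fin (q + 1) → Submodule ℝ V))
    (hNsup : iSup (Fin.cons N0 N : Fin (q + 1) → Submodule ℝ V) = ⊤)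
    (hNorth : ∀ i j : Fin (q + 1), i ≠ j →
      ∀ x ∈ (Fin.cons N0 N : Fin (q + 1) → Submodule ℝ V) i,
      ∀ y ∈ (Fin.cons N0 N : Fin (q + 1) → Submodule ℝ V) j, B x y = 0)
    (hNindec : ∀ j, IsIndecomposable B H (N j))
    (hone : ∃! j : Fin p, fixedSubspace H (M j) ≠ ⊥ ∧ ¬ NoNontrivialDecomp H (M j))
    (Hs : Fin p → Subgroup (V ≃ₗ[ℝ] V)) (Gs : Fin q → Subgroup (V ≃ₗ[ℝ] V))
    (hHs : IsInternalDirectProduct H Hs)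
    (hHact : ∀ i, (∀ g ∈ Hs i, ∀ x ∈ M i, g x ∈ M i) ∧
      (∀ j, j ≠ i → ∀ g ∈ Hs i, ∀ x ∈ M j, g x = x) ∧
      (∀ g ∈ Hs i, ∀ x ∈ M0, g x = x))
    (hGs : IsInternalDirectProduct H Gs)
    (hGact : ∀ i, (∀ g ∈ Gs i, ∀ x ∈ N i, g x ∈ N i) ∧
      (∀ j, j ≠ i → ∀ g ∈ Gs i, ∀ x ∈ N j, g x = x) ∧
      (∀ g ∈ Gs i, ∀ x ∈ N0, g x = x)) :
    p = q ∧ ∃ σ : Fin p ≃ Fin q, ∀ i, Hs i = Gs (σ i) := by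
  let DM : DecompData B H :=
    { p := p, U0 := M0, Us := M, Gr := Hs,
      indep := hMind, sup_top := hMsup, orth' := hMorth, max0 := hMmax,
      indec := hMindec, grle := hHs.1, norm := hHs.2.1,
      fact := fun h hh => (hHs.2.2.2 h hh).exists,
      act_in := fun i => (hHact i).1,
      act_triv := fun i j hj => (hHact i).2.1 j hj,
      act_triv0 := fun i => (hHact i).2.2 }
  let DN : DecompData B H :=
    { p := q, U0 := N0, Us := N, Gr := Gs,
      indep := hNind, sup_top := hNsup, orth' := hNorth, max0 := hNmax,
      indec := hNindec, grle := hGs.1, norm := hGs.2.1,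
      fact := fun h hh => (hGs.2.2.2 h hh).exists,
      act_in := fun i => (hGact i).1,
      act_triv := fun i j hj => (hGact i).2.1 j hj,
      act_triv0 := fun i => (hGact i).2.2 }
  exact DecompData.main DM DN hsymm hH hone
end
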